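/- arXiv:2201.11169 — 7 statements merged into one kernel-verified Lean document; each statement's English description precedes it below -/
import Mathlib

section
/- Let P : ℝ → ℝ be smooth and let κ : ℝ → ℝ be a smooth function satisfying the Euler–Lagrange equation (d²/ds²)(Ṗ(κ(s))) + Ṗ(κ(s))·(κ(s)² + ρ) − κ(s)·P(κ(s)) = 0, where Ṗ denotes the derivative of P. Then the function s ↦ ((d/ds)Ṗ(κ(s)))² + (κ(s)·Ṗ(κ(s)) − P(κ(s)))² + ρ·(Ṗ(κ(s)))² is constant. -/
open scoped ContDiff


theorem stmt_1 (P κ : ℝ → ℝ) (ρ : ℝ)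
    (hP : ContDiff ℝ (⊤ : ℕ∞) P) (hκ : ContDiff ℝ (⊤ : ℕ∞) κ)
    (hEL : ∀ s : ℝ,
      iteratedDeriv 2 (fun t => deriv P (κ t)) s
        + deriv P (κ s) * ((κ s) ^ 2 + ρ) - κ s * P (κ s) = 0) :
    ∃ C : ℝ, ∀ s : ℝ,
      (deriv (fun t => deriv P (κ t)) s) ^ 2
        + (κ s * deriv P (κ s) - P (κ s)) ^ 2
        + ρ * (deriv P (κ s)) ^ 2 = C := by
  set W : ℝ → ℝ := fun t => deriv P (κ t) with hWdef
  have hP' : ContDiff ℝ ∞ P := hP.of_le (by simp)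
  have hκ' : ContDiff ℝ ∞ κ := hκ.of_le (by simp)
  have hPd : ContDiff ℝ ∞ (deriv P) := (contDiff_infty_iff_deriv.mp hP').2
  have hWc : ContDiff ℝ ∞ W := hPd.comp hκ'
  have hW'c : ContDiff ℝ ∞ (deriv W) := (contDiff_infty_iff_deriv.mp hWc).2
  set E : ℝ → ℝ := fun t =>
    (deriv W t) ^ 2 + (κ t * W t - P (κ t)) ^ 2 + ρ * (W t) ^ 2 with hEdef
  have h1 : (1 : WithTop ℕ∞) ≤ ∞ := by exact_mod_cast le_top
  have h1' : (∞ : WithTop ℕ∞) ≠ 0 := (lt_of_lt_of_le zero_lt_one h1).ne'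
  have key : ∀ s : ℝ, HasDerivAt E 0 s := by
    intro s
    have hκd : HasDerivAt κ (deriv κ s) s := (hκ'.differentiable h1' s).hasDerivAt
    have hWd : HasDerivAt W (deriv W s) s := (hWc.differentiable h1' s).hasDerivAt
    have hW'd : HasDerivAt (deriv W) (deriv (deriv W) s) s :=
      (hW'c.differentiable h1' s).hasDerivAt
    have hPκ : HasDerivAt (fun t => P (κ t)) (deriv P (κ s) * deriv κ s) s :=
      (hP'.differentiable h1' (κ s)).hasDerivAt.comp s hκd
    have hEL' : deriv (deriv W) s = κ s * P (κ s) - W s * ((κ s) ^ 2 + ρ) := by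
      have h := hEL s
      have h2 : iteratedDeriv 2 W s = deriv (deriv W) s := by
        simp [iteratedDeriv_succ, iteratedDeriv_zero]
      rw [h2] at h
      linarith
    have h2 : HasDerivAt (fun t => κ t * W t - P (κ t))
        (deriv κ s * W s + κ s * deriv W s - deriv P (κ s) * deriv κ s) s :=
      (hκd.mul hWd).sub hPκ
    have hF : HasDerivAt
        (fun t => deriv W t * deriv W t
          + (κ t * W t - P (κ t)) * (κ t * W t - P (κ t)) + ρ * (W t * W t))
        (deriv (deriv W) s * deriv W s + deriv W s * deriv (deriv W) s
          + ((deriv κ s * W s + κ s * deriv W s - deriv P (κ s) * deriv κ s)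
              * (κ s * W s - P (κ s))
            + (κ s * W s - P (κ s))
              * (deriv κ s * W s + κ s * deriv W s - deriv P (κ s) * deriv κ s))
          + ρ * (deriv W s * W s + W s * deriv W s)) s :=
      ((hW'd.mul hW'd).add (h2.mul h2)).add ((hWd.mul hWd).const_mul ρ)
    have hEF : E = fun t => deriv W t * deriv W t
        + (κ t * W t - P (κ t)) * (κ t * W t - P (κ t)) + ρ * (W t * W t) := by
      funext t; simp only [hEdef]; ring
    have hD0 : (deriv (deriv W) s * deriv W s + deriv W s * deriv (deriv W) s
          + ((deriv κ s * W s + κ s * deriv W s - deriv P (κ s) * deriv κ s)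
              * (κ s * W s - P (κ s))
            + (κ s * W s - P (κ s))
              * (deriv κ s * W s + κ s * deriv W s - deriv P (κ s) * deriv κ s))
          + ρ * (deriv W s * W s + W s * deriv W s)) = 0 := by
      have hWP : deriv P (κ s) = W s := rfl
      rw [hEL', hWP]; ring
    rw [hEF]
    exact hD0 ▸ hF
  refine ⟨E 0, fun s => ?_⟩
  have hconst : E s = E 0 :=
    is_const_of_deriv_eq_zero (fun x => (key x).differentiableAt)
      (fun x => (key x).deriv) s 0
  simpa [hEdef] using hconst
end

section
/- Fix p ∈ (0,1) with 3/(1−p) = n+1 for a natural number n ≥ 3, and fix ρ ≤ 0 and d > 0. Then the polynomial Q(u) = −(1−p)²·u^{n+1} + d·u³ − ρ·p² has exactly one positive real root. -/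
theorem stmt_3 (p ρ d : ℝ) (n : ℕ) (hn : 3 ≤ n)
    (hp : 0 < p) (hp1 : p < 1) (hpn : 3 / (1 - p) = (n : ℝ) + 1)
    (hρ : ρ ≤ 0) (hd : 0 < d) :
    ∃! u : ℝ, 0 < u ∧ -(1 - p) ^ 2 * u ^ (n + 1) + d * u ^ 3 - ρ * p ^ 2 = 0 := by
  set c : ℝ := (1 - p) ^ 2 with hc
  have hc0 : 0 < c := pow_pos (by linarith) 2
  have hρp : ρ * p ^ 2 ≤ 0 := mul_nonpos_of_nonpos_of_nonneg hρ (sq_nonneg p)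
  have hsplit : ∀ x : ℝ, x ^ (n + 1) = x ^ (n - 2) * x ^ 3 := by
    intro x
    rw [← pow_add]
    congr 1
    omega
  -- uniqueness lemma
  have huniq : ∀ u v : ℝ, 0 < u → u < v →
      (-c * u ^ (n + 1) + d * u ^ 3 - ρ * p ^ 2 = 0) →
      (-c * v ^ (n + 1) + d * v ^ 3 - ρ * p ^ 2 = 0) → False := by
    intro u v hu huv e1 e2
    have hv : 0 < v := hu.trans huv
    rw [hsplit u] at e1
    rw [hsplit v] at e2
    have h1 : u ^ (n - 2) < v ^ (n - 2) := pow_lt_pow_left₀ huv hu.le (by omega)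
    have h3 : u ^ 3 < v ^ 3 := pow_lt_pow_left₀ huv hu.le (by norm_num)
    have key : c * u ^ (n - 2) * (u ^ 3 * v ^ 3) - c * v ^ (n - 2) * (u ^ 3 * v ^ 3)
        = ρ * p ^ 2 * (u ^ 3 - v ^ 3) := by
      linear_combination (-(v ^ 3)) * e1 + (u ^ 3) * e2
    have L : c * u ^ (n - 2) * (u ^ 3 * v ^ 3) - c * v ^ (n - 2) * (u ^ 3 * v ^ 3) < 0 := by
      nlinarith [mul_pos (mul_pos hc0 (sub_pos.mpr h1))
        (mul_pos (pow_pos hu 3) (pow_pos hv 3))]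
    have R : 0 ≤ ρ * p ^ 2 * (u ^ 3 - v ^ 3) :=
      by nlinarith [mul_nonneg (neg_nonneg.mpr hρp) (neg_nonneg.mpr (show u ^ 3 - v ^ 3 ≤ 0 by linarith))]
    linarith [key, L, R]
  -- existence
  set a : ℝ := min 1 (d / (2 * c)) with ha
  have ha0 : 0 < a := lt_min one_pos (by positivity)
  have ha1 : a ≤ 1 := min_le_left _ _
  have haQ : 0 < -c * a ^ (n + 1) + d * a ^ 3 - ρ * p ^ 2 := by
    have h1 : a ^ (n - 2) ≤ a := by
      calc a ^ (n - 2) ≤ a ^ 1 := pow_le_pow_of_le_one ha0.le ha1 (by omega)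
      _ = a := pow_one a
    have h2 : c * a ≤ d / 2 := by
      have hle : a ≤ d / (2 * c) := min_le_right _ _
      have : c * a ≤ c * (d / (2 * c)) := by nlinarith
      have heq : c * (d / (2 * c)) = d / 2 := by field_simp
      linarith [heq ▸ this]
    have h3 : c * a ^ (n - 2) ≤ d / 2 := by nlinarith
    have h4 : c * a ^ (n - 2) * a ^ 3 ≤ d / 2 * a ^ 3 :=
      mul_le_mul_of_nonneg_right h3 (pow_pos ha0 3).le
    have h5 : 0 < d / 2 * a ^ 3 := by positivity
    rw [hsplit a]
    nlinarith [h4, h5, hρp]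
  set b : ℝ := max 1 ((d - ρ * p ^ 2) / c + 1) with hb
  have hb1 : (1 : ℝ) ≤ b := le_max_left _ _
  have hb0 : 0 < b := lt_of_lt_of_le one_pos hb1
  have hbc : d - ρ * p ^ 2 < c * b := by
    have h : (d - ρ * p ^ 2) / c + 1 ≤ b := le_max_right _ _
    have h' : (d - ρ * p ^ 2) / c < b := by linarith
    have heq : c * ((d - ρ * p ^ 2) / c) = d - ρ * p ^ 2 := by field_simp
    nlinarith [mul_lt_mul_of_pos_left h' hc0]
  have hbQ : -c * b ^ (n + 1) + d * b ^ 3 - ρ * p ^ 2 < 0 := by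
    have h1 : b ≤ b ^ (n - 2) := le_self_pow₀ hb1 (by omega)
    have hcb : d - ρ * p ^ 2 < c * b ^ (n - 2) := by nlinarith
    have hb3 : (1 : ℝ) ≤ b ^ 3 := one_le_pow₀ hb1
    have key : (d - ρ * p ^ 2) * b ^ 3 < c * b ^ (n - 2) * b ^ 3 :=
      mul_lt_mul_of_pos_right hcb (pow_pos hb0 3)
    have last : ρ * p ^ 2 * (b ^ 3 - 1) ≤ 0 :=
      mul_nonpos_of_nonpos_of_nonneg hρp (by linarith)
    rw [hsplit b]
    linarith [key, last]
  have hab : a ≤ b := ha1.trans hb1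
  have hcont : ContinuousOn (fun u : ℝ => -c * u ^ (n + 1) + d * u ^ 3 - ρ * p ^ 2)
      (Set.Icc a b) := by
    exact (((continuous_const.mul (continuous_pow (n + 1))).add
      (continuous_const.mul (continuous_pow 3))).sub continuous_const).continuousOn
  have hmem : (0 : ℝ) ∈ Set.Icc (-c * b ^ (n + 1) + d * b ^ 3 - ρ * p ^ 2)
      (-c * a ^ (n + 1) + d * a ^ 3 - ρ * p ^ 2) := ⟨hbQ.le, haQ.le⟩
  obtain ⟨u, hu, hQu⟩ := intermediate_value_Icc' hab hcont hmem
  have hu0 : 0 < u := lt_of_lt_of_le ha0 hu.1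
  refine ⟨u, ⟨hu0, hQu⟩, ?_⟩
  rintro v ⟨hv0, hEv⟩
  rcases lt_trichotomy v u with h | h | h
  · exact absurd hQu (fun hq => huniq v u hv0 h hEv hq)
  · exact h
  · exact absurd hQu (fun hq => huniq u v hu0 h hq hEv)
end

section
/- Fix p ∈ (0,1) with 3/(1−p) = n+1 for some natural n ≥ 3, and let ρ > 0 and u_* = (d/(1−p))^{(1−p)/(3p)}. Then Q(u_*) > 0 holds for the polynomial Q(u) = −(1−p)²·u^{n+1} + d·u³ − ρ·p² if and only if d > d_* := ρ^p · p^p · (1−p)^{1−p}. -/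
/-! With `a = d / (1 - p)` and `u_* = a ^ ((1 - p) / (3 p))`, the relation `3 / (1 - p) = n + 1`
gives `u_*^(n+1) = a^(1/p)` and `d u_*^3 = (1 - p) a^(1/p)`, so
`Q(u_*) = p (1 - p) a^(1/p) - ρ p^2`. Hence `Q(u_*) > 0` iff `a^(1/p) > ρ p / (1 - p)`, and raising
to the power `p` turns this into `d > (ρ p)^p (1 - p)^(1 - p)`. -/

open Real

lemma rpow_pow_eq_of_mul_natCast_eq {a x y : ℝ} {m : ℕ} (ha : 0 ≤ a) (h : x * m = y) :
    (a ^ x) ^ m = a ^ y := by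
  rw [← rpow_mul_natCast ha, h]

lemma neg_sq_mul_pow_succ_add_mul_pow_three {p d : ℝ} {n : ℕ} (hp : 0 < p) (hp1 : p < 1)
    (hpn : 3 / (1 - p) = (n : ℝ) + 1) (hd : 0 < d) :
    -(1 - p) ^ 2 * ((d / (1 - p)) ^ ((1 - p) / (3 * p))) ^ (n + 1)
        + d * ((d / (1 - p)) ^ ((1 - p) / (3 * p))) ^ 3
      = p * (1 - p) * (d / (1 - p)) ^ p⁻¹ := by
  have hq : 0 < 1 - p := by linarith
  set a := d / (1 - p) with ha_def
  have ha : 0 < a := div_pos hd hq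
  have hda : d = (1 - p) * a := by rw [ha_def]; field_simp
  have h_succ : (a ^ ((1 - p) / (3 * p))) ^ (n + 1) = a ^ p⁻¹ :=
    rpow_pow_eq_of_mul_natCast_eq ha.le <| by
      rw [Nat.cast_add_one, ← hpn]; field_simp
  have h_three : (a ^ ((1 - p) / (3 * p))) ^ 3 = a ^ (p⁻¹ - 1) :=
    rpow_pow_eq_of_mul_natCast_eq ha.le <| by
      push_cast; field_simp
  have h_mul : a * a ^ (p⁻¹ - 1) = a ^ p⁻¹ := by
    rw [rpow_sub_one ha.ne', mul_div_cancel₀ _ ha.ne']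
  rw [h_succ, h_three, hda, mul_assoc, h_mul]
  ring

lemma div_rpow_mul_self {x q : ℝ} (hx : 0 ≤ x) (hq : 0 < q) (p : ℝ) :
    (x / q) ^ p * q = x ^ p * q ^ (1 - p) := by
  rw [div_rpow hx hq.le, rpow_sub hq, rpow_one]
  have : q ^ p ≠ 0 := (rpow_pos_of_pos hq p).ne'
  field_simp

theorem stmt_5_general (p ρ d : ℝ) (n : ℕ)
    (hp : 0 < p) (hp1 : p < 1) (hpn : 3 / (1 - p) = (n : ℝ) + 1)
    (hρ : 0 < ρ) (hd : 0 < d) :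
    (0 < -(1 - p) ^ 2 * ((d / (1 - p)) ^ ((1 - p) / (3 * p))) ^ (n + 1)
        + d * ((d / (1 - p)) ^ ((1 - p) / (3 * p))) ^ 3 - ρ * p ^ 2)
    ↔ ρ ^ p * p ^ p * (1 - p) ^ (1 - p) < d := by
  have hq : 0 < 1 - p := by linarith
  rw [neg_sq_mul_pow_succ_add_mul_pow_three hp hp1 hpn hd]
  have h_factor : p * (1 - p) * (d / (1 - p)) ^ p⁻¹ - ρ * p ^ 2
      = p * (1 - p) * ((d / (1 - p)) ^ p⁻¹ - ρ * p / (1 - p)) := by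
    field_simp
  calc 0 < p * (1 - p) * (d / (1 - p)) ^ p⁻¹ - ρ * p ^ 2
      ↔ ρ * p / (1 - p) < (d / (1 - p)) ^ p⁻¹ := by
        rw [h_factor, mul_pos_iff_of_pos_left (by positivity), sub_pos]
    _ ↔ (ρ * p / (1 - p)) ^ p < d / (1 - p) :=
        lt_rpow_inv_iff_of_pos (by positivity) (by positivity) hp
    _ ↔ (ρ * p / (1 - p)) ^ p * (1 - p) < d := lt_div_iff₀ hq
    _ ↔ ρ ^ p * p ^ p * (1 - p) ^ (1 - p) < d := by
        rw [div_rpow_mul_self (by positivity) hq, mul_rpow hρ.le hp.le]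

theorem stmt_5 (p ρ d : ℝ) (n : ℕ) (hn : 3 ≤ n)
    (hp : 0 < p) (hp1 : p < 1) (hpn : 3 / (1 - p) = (n : ℝ) + 1)
    (hρ : 0 < ρ) (hd : 0 < d) :
    (0 < -(1 - p) ^ 2 * ((d / (1 - p)) ^ ((1 - p) / (3 * p))) ^ (n + 1)
        + d * ((d / (1 - p)) ^ ((1 - p) / (3 * p))) ^ 3 - ρ * p ^ 2)
    ↔ ρ ^ p * p ^ p * (1 - p) ^ (1 - p) < d :=
  stmt_5_general p ρ d n hp hp1 hpn hρ hd
end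

section
/- Fix p ∈ (0,1) with 3/(1−p) = n+1 for some natural n ≥ 3, and let ρ > 0 and d > d_* = ρ^p·p^p·(1−p)^{1−p}. Then the polynomial Q(u) = −(1−p)²·u^{n+1} + d·u³ − ρ·p² has exactly two positive real roots 0 < β < α, with Q > 0 on (β, α) and Q < 0 on (0, β) ∪ (α, ∞). -/
/-!
For `k > 3`, `Q(u) = -a u^k + d u^3 - c` has derivative `u² (3d - k a u^(k-3))`, so on `[0, ∞)` it
increases up to its unique critical point and decreases afterwards. Since `Q(0) = -c < 0` and
`Q(u) → -∞`, it has exactly two positive roots, with `Q > 0` exactly between them, as soon as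
it is positive somewhere. In the case at hand, `3 = (1 - p)(n + 1)` makes `u₀ = (ρp/(1-p))^(1/(n+1))`
satisfy `d_* u₀³ = ρp`, whence `Q(u₀) = (d - d_*) u₀³ > 0`.
-/

open Set

namespace PElastic

def Q (a d c : ℝ) (k : ℕ) (u : ℝ) : ℝ := -a * u ^ k + d * u ^ 3 - c

theorem exists_pos_pow_eq {y : ℝ} (hy : 0 < y) {j : ℕ} (hj : j ≠ 0) :
    ∃ x : ℝ, 0 < x ∧ x ^ j = y :=
  ⟨y ^ (j⁻¹ : ℝ), by positivity, Real.rpow_inv_natCast_pow hy.le hj⟩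

theorem exists_roots_of_strictMonoOn_of_strictAntiOn {f : ℝ → ℝ} {m M : ℝ} (hf : Continuous f)
    (hmono : StrictMonoOn f (Icc 0 m)) (hanti : StrictAntiOn f (Ici m)) (hm : 0 ≤ m)
    (hmM : m ≤ M) (h0 : f 0 < 0) (hfm : 0 < f m) (hfM : f M < 0) :
    ∃ α β : ℝ, 0 < β ∧ β < α ∧ f β = 0 ∧ f α = 0 ∧
      (∀ u, β < u → u < α → 0 < f u) ∧ (∀ u, 0 < u → u < β → f u < 0) ∧
      (∀ u, α < u → f u < 0) := by
  obtain ⟨β, ⟨hβ0, hβm⟩, hβ⟩ := intermediate_value_Ioo hm hf.continuousOn ⟨h0, hfm⟩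
  obtain ⟨α, ⟨hmα, -⟩, hα⟩ := intermediate_value_Ioo' hmM hf.continuousOn ⟨hfM, hfm⟩
  refine ⟨α, β, hβ0, hβm.trans hmα, hβ, hα, fun u hβu huα => ?_, fun u hu huβ => ?_,
    fun u hαu => ?_⟩
  · rcases le_or_gt u m with hum | hmu
    · simpa [hβ] using hmono ⟨hβ0.le, hβm.le⟩ ⟨(hβ0.trans hβu).le, hum⟩ hβu
    · simpa [hα] using hanti hmu.le hmα.le huα
  · simpa [hβ] using hmono ⟨hu.le, (huβ.trans hβm).le⟩ ⟨hβ0.le, hβm.le⟩ huβ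
  · simpa [hα] using hanti hmα.le (hmα.trans hαu).le hαu

section

variable {a d c : ℝ} {k : ℕ}

theorem continuous_Q : Continuous (Q a d c k) := by
  unfold Q; fun_prop

theorem hasDerivAt_Q (hk : 3 ≤ k) (u : ℝ) :
    HasDerivAt (Q a d c k) (u ^ 2 * (3 * d - k * a * u ^ (k - 3))) u := by
  refine ((((hasDerivAt_pow k u).const_mul (-a)).add
    ((hasDerivAt_pow 3 u).const_mul d)).sub_const c).congr_deriv ?_
  obtain ⟨j, rfl⟩ := Nat.exists_eq_add_of_le' hk
  rw [show j + 3 - 3 = j by omega, show j + 3 - 1 = j + 2 by omega]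
  push_cast
  ring

theorem Q_eq_pow_three_mul (hk : 3 ≤ k) (u : ℝ) :
    Q a d c k u = u ^ 3 * (d - a * u ^ (k - 3)) - c := by
  rw [Q, ← pow_sub_mul_pow u hk]
  ring

theorem strictMonoOn_Q (ha : 0 < a) (hk : 3 < k) {m : ℝ} (hcrit : k * a * m ^ (k - 3) = 3 * d) :
    StrictMonoOn (Q a d c k) (Icc 0 m) := by
  refine strictMonoOn_of_deriv_pos (convex_Icc 0 m) continuous_Q.continuousOn fun u hu => ?_
  rw [interior_Icc] at hu
  rw [(hasDerivAt_Q hk.le u).deriv]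
  have hum : u ^ (k - 3) < m ^ (k - 3) := pow_lt_pow_left₀ hu.2 hu.1.le (by omega)
  have hka : (0 : ℝ) < k * a := by positivity
  have := mul_lt_mul_of_pos_left hum hka
  exact mul_pos (pow_pos hu.1 2) (by linarith)

theorem strictAntiOn_Q (ha : 0 < a) (hk : 3 < k) {m : ℝ} (hm : 0 ≤ m)
    (hcrit : k * a * m ^ (k - 3) = 3 * d) : StrictAntiOn (Q a d c k) (Ici m) := by
  refine strictAntiOn_of_deriv_neg (convex_Ici m) continuous_Q.continuousOn fun u hu => ?_
  rw [interior_Ici] at hu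
  rw [(hasDerivAt_Q hk.le u).deriv]
  have hmu : m ^ (k - 3) < u ^ (k - 3) := pow_lt_pow_left₀ hu hm (by omega)
  have hka : (0 : ℝ) < k * a := by positivity
  have := mul_lt_mul_of_pos_left hmu hka
  exact mul_neg_of_pos_of_neg (pow_pos (hm.trans_lt hu) 2) (by linarith)

theorem Q_neg_of_le (hc : 0 < c) (hk : 3 ≤ k) {u : ℝ} (hu : 0 ≤ u) (hdu : d ≤ a * u ^ (k - 3)) :
    Q a d c k u < 0 := by
  rw [Q_eq_pow_three_mul hk]
  nlinarith [mul_nonpos_of_nonneg_of_nonpos (pow_nonneg hu 3) (sub_nonpos.mpr hdu)]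

theorem exists_two_roots_Q (ha : 0 < a) (hd : 0 < d) (hc : 0 < c) (hk : 3 < k) {u₀ : ℝ}
    (hu₀ : 0 ≤ u₀) (hQu₀ : 0 < Q a d c k u₀) :
    ∃ α β : ℝ, 0 < β ∧ β < α ∧ Q a d c k β = 0 ∧ Q a d c k α = 0 ∧
      (∀ u, β < u → u < α → 0 < Q a d c k u) ∧ (∀ u, 0 < u → u < β → Q a d c k u < 0) ∧
      (∀ u, α < u → Q a d c k u < 0) := by
  have hk3 : k - 3 ≠ 0 := by omega
  obtain ⟨m, hm, hmk⟩ := exists_pos_pow_eq (by positivity : 0 < 3 * d / (k * a)) hk3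
  have hcrit : k * a * m ^ (k - 3) = 3 * d := by
    rw [hmk]; field_simp
  obtain ⟨w, hw, hwk⟩ := exists_pos_pow_eq (by positivity : 0 < d / a) hk3
  have hmono := strictMonoOn_Q (c := c) ha hk hcrit
  have hanti := strictAntiOn_Q (c := c) ha hk hm.le hcrit
  have hQm : 0 < Q a d c k m := by
    rcases le_total u₀ m with h | h
    · exact hQu₀.trans_le (hmono.monotoneOn ⟨hu₀, h⟩ ⟨hm.le, le_rfl⟩ h)
    · exact hQu₀.trans_le (hanti.antitoneOn self_mem_Ici h h)
  have hQM : Q a d c k (max m w) < 0 := by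
    refine Q_neg_of_le hc hk.le (hm.le.trans (le_max_left m w)) ?_
    calc d = a * w ^ (k - 3) := by rw [hwk]; field_simp
      _ ≤ a * max m w ^ (k - 3) := by gcongr; exact le_max_right m w
  have hQ0 : Q a d c k 0 < 0 := by simp [Q, zero_pow (by omega : k ≠ 0), hc]
  exact exists_roots_of_strictMonoOn_of_strictAntiOn continuous_Q hmono hanti hm.le
    (le_max_left m w) hQ0 hQm hQM

end

theorem threshold_mul_pow_three {p ρ u : ℝ} {n : ℕ} (hp : 0 < p) (hp1 : p < 1)
    (h3 : (1 - p) * (n + 1) = 3) (hρ : 0 < ρ) (hu : 0 ≤ u)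
    (hun : u ^ (n + 1) = ρ * p / (1 - p)) :
    ρ ^ p * p ^ p * (1 - p) ^ (1 - p) * u ^ 3 = ρ * p := by
  have hp1' : 0 < 1 - p := by linarith
  have hu3 : u ^ 3 = (ρ * p) ^ (1 - p) / (1 - p) ^ (1 - p) := by
    rw [← Real.div_rpow (by positivity) hp1'.le, ← hun, ← Real.rpow_natCast u (n + 1),
      ← Real.rpow_mul hu]
    push_cast
    rw [mul_comm, h3]
    norm_cast
  rw [hu3, ← Real.mul_rpow hρ.le hp.le]
  field_simp
  rw [← Real.rpow_add (by positivity)]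
  simp

end PElastic

theorem stmt_6 (p ρ d : ℝ) (n : ℕ) (hn : 3 ≤ n)
    (hp : 0 < p) (hp1 : p < 1) (hpn : 3 / (1 - p) = (n : ℝ) + 1)
    (hρ : 0 < ρ) (hd : ρ ^ p * p ^ p * (1 - p) ^ (1 - p) < d) :
    ∃ α β : ℝ, 0 < β ∧ β < α ∧
      (-(1 - p) ^ 2 * β ^ (n + 1) + d * β ^ 3 - ρ * p ^ 2 = 0) ∧
      (-(1 - p) ^ 2 * α ^ (n + 1) + d * α ^ 3 - ρ * p ^ 2 = 0) ∧
      (∀ u : ℝ, β < u → u < α → 0 < -(1 - p) ^ 2 * u ^ (n + 1) + d * u ^ 3 - ρ * p ^ 2) ∧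
      (∀ u : ℝ, 0 < u → u < β → -(1 - p) ^ 2 * u ^ (n + 1) + d * u ^ 3 - ρ * p ^ 2 < 0) ∧
      (∀ u : ℝ, α < u → -(1 - p) ^ 2 * u ^ (n + 1) + d * u ^ 3 - ρ * p ^ 2 < 0) := by
  have h3 : (1 - p) * (n + 1) = 3 := by
    rw [← hpn]; field_simp [show 1 - p ≠ 0 by linarith]
  -- `u₀` is the double root of `Q` in the borderline case `d = d_*`.
  obtain ⟨u₀, hu₀, hu₀n⟩ :=
    PElastic.exists_pos_pow_eq (by positivity : 0 < ρ * p / (1 - p)) n.add_one_ne_zero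
  have hthreshold := PElastic.threshold_mul_pow_three hp hp1 h3 hρ hu₀.le hu₀n
  have hQu₀ : PElastic.Q ((1 - p) ^ 2) d (ρ * p ^ 2) (n + 1) u₀
      = (d - ρ ^ p * p ^ p * (1 - p) ^ (1 - p)) * u₀ ^ 3 := by
    rw [PElastic.Q, hu₀n]
    field_simp
    linear_combination hthreshold
  have hd_pos : 0 < d := (by positivity : 0 < ρ ^ p * p ^ p * (1 - p) ^ (1 - p)).trans hd
  exact PElastic.exists_two_roots_Q (by positivity) hd_pos (by positivity) (by omega) hu₀.le
    (hQu₀ ▸ mul_pos (sub_pos.mpr hd) (by positivity))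
end

section
/- Fix p ∈ (0,1) with 3/(1−p) ∈ ℕ, ρ > 0, and d > d_* = ρ^p p^p (1−p)^{1−p}. Any maximal solution u : ℝ → (0, ∞) of u_s² = (4u²/(9p²))·Q(u) with Q(u) = −(1−p)²u^{3/(1−p)} + du³ − ρp², having nonconstant u, is defined on all of ℝ and is periodic. -/
set_option maxHeartbeats 1000000

open Set Filter Topology

section Helpers

lemma reflect_of_deriv_zero (u G : ℝ → ℝ) (hu : ContDiff ℝ (⊤ : ℕ∞) u) (hG : ContDiff ℝ 1 G)
    (hode : ∀ s, deriv (deriv u) s = G (u s))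
    (M : ℝ) (hbd : ∀ s, |u s| ≤ M ∧ |deriv u s| ≤ M)
    (s₀ : ℝ) (h0 : deriv u s₀ = 0) : ∀ t, u (2 * s₀ - t) = u t := by
  have hu1 : Differentiable ℝ u := hu.differentiable (by simp)
  have hu' : ContDiff ℝ ((⊤ : ℕ∞) : WithTop ℕ∞) (deriv u) := by
    have huinf : ContDiff ℝ ((⊤ : ℕ∞) : WithTop ℕ∞) u := hu.of_le (by simp)
    have h := ContDiff.iterate_deriv (𝕜 := ℝ) (F := ℝ) 1 huinf
    simpa using h
  have hu'1 : Differentiable ℝ (deriv u) := hu'.differentiable (by simp)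
  set V : ℝ × ℝ → ℝ × ℝ := fun z => (z.2, G z.1) with hVdef
  have hVc : ContDiff ℝ 1 V := (ContDiff.prodMk contDiff_snd (hG.comp contDiff_fst))
  set S : Set (ℝ × ℝ) := Icc (-M) M ×ˢ Icc (-M) M with hSdef
  have hM0 : 0 ≤ M := le_trans (abs_nonneg _) (hbd 0).1
  have hconv : Convex ℝ S := (convex_Icc _ _).prod (convex_Icc _ _)
  have hcomp : IsCompact S := isCompact_Icc.prod isCompact_Icc
  obtain ⟨C, hC⟩ := hcomp.exists_bound_of_continuousOn
    ((hVc.continuous_fderiv (by norm_num)).continuousOn (s := S))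
  have hC0 : 0 ≤ C := le_trans (norm_nonneg _) (hC (0, 0)
    (by constructor <;> constructor <;> simp [hM0]))
  have hlip : LipschitzOnWith C.toNNReal V S := by
    apply hconv.lipschitzOnWith_of_nnnorm_fderiv_le
      (fun x _ => hVc.differentiable (by norm_num) x)
    intro x hx
    have : (‖fderiv ℝ V x‖₊ : ℝ) ≤ (C.toNNReal : ℝ) := by
      rw [coe_nnnorm, Real.coe_toNNReal C hC0]
      exact hC x hx
    exact_mod_cast this
  have hf' : ∀ t, HasDerivAt (fun t => (u t, deriv u t)) (V (u t, deriv u t)) t := by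
    intro t
    have h1 : HasDerivAt u (deriv u t) t := (hu1 t).hasDerivAt
    have h2 : HasDerivAt (deriv u) (G (u t)) t := by
      have := (hu'1 t).hasDerivAt
      rwa [hode t] at this
    exact h1.prodMk h2
  have hw' : ∀ t, HasDerivAt (fun t => (u (2 * s₀ - t), -(deriv u (2 * s₀ - t))))
      (V (u (2 * s₀ - t), -(deriv u (2 * s₀ - t)))) t := by
    intro t
    have hin : HasDerivAt (fun t : ℝ => 2 * s₀ - t) (-1) t := by
      simpa using (hasDerivAt_id t).const_sub (2 * s₀)
    have h1 : HasDerivAt (fun t => u (2 * s₀ - t)) (deriv u (2 * s₀ - t) * (-1)) t :=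
      (hu1 _).hasDerivAt.comp t hin
    have h2 : HasDerivAt (fun t => -(deriv u (2 * s₀ - t)))
        (-(deriv (deriv u) (2 * s₀ - t) * (-1))) t :=
      ((hu'1 _).hasDerivAt.comp t hin).neg
    have h1' : HasDerivAt (fun t => u (2 * s₀ - t)) (-(deriv u (2 * s₀ - t))) t := by
      simpa using h1
    have h2' : HasDerivAt (fun t => -(deriv u (2 * s₀ - t))) (G (u (2 * s₀ - t))) t := by
      rw [show (-(deriv (deriv u) (2 * s₀ - t) * (-1))) = deriv (deriv u) (2 * s₀ - t) by ring,
        hode] at h2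
      exact h2
    exact h1'.prodMk h2'
  have hmem : ∀ a b : ℝ, (a, b) ∈ S ↔ |a| ≤ M ∧ |b| ≤ M := by
    intro a b
    simp only [hSdef, Set.mem_prod, Set.mem_Icc, abs_le]
  intro t
  set a := min t s₀ - 1
  set b := max t s₀ + 1
  have hta : a < t := by simp only [a]; have := min_le_left t s₀; linarith
  have htb : t < b := by simp only [b]; have := le_max_left t s₀; linarith
  have hs₀ : s₀ ∈ Ioo a b := by
    constructor
    · simp only [a]; have := min_le_right t s₀; linarith
    · simp only [b]; have := le_max_right t s₀; linarith
  have heq := ODE_solution_unique_of_mem_Ioo (v := fun _ z => V z) (s := fun _ => S)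
    (fun _ _ => hlip) hs₀
    (f := fun t => (u t, deriv u t))
    (g := fun t => (u (2 * s₀ - t), -(deriv u (2 * s₀ - t))))
    (fun t _ => ⟨hf' t, (hmem _ _).2 (hbd t)⟩)
    (fun t _ => ⟨hw' t, (hmem _ _).2 ⟨(hbd _).1, by simpa using (hbd (2 * s₀ - t)).2⟩⟩)
    (by simp [h0, show 2 * s₀ - s₀ = s₀ by ring])
  have := heq ⟨hta, htb⟩
  exact (congrArg Prod.fst this).symm

end Helpers

theorem stmt_15 (p ρ d : ℝ) (n : ℕ)
    (hp : 0 < p) (hp1 : p < 1) (hpn : 3 / (1 - p) = (n : ℝ))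
    (hρ : 0 < ρ) (hd : ρ ^ p * p ^ p * (1 - p) ^ (1 - p) < d)
    (u : ℝ → ℝ) (hu : ContDiff ℝ (⊤ : ℕ∞) u) (hupos : ∀ s, 0 < u s)
    (hODE : ∀ s : ℝ, (deriv u s) ^ 2 =
      4 * (u s) ^ 2 / (9 * p ^ 2) *
        (-(1 - p) ^ 2 * (u s) ^ n + d * (u s) ^ 3 - ρ * p ^ 2))
    (hODE2 : ∀ s : ℝ, deriv (deriv u) s =
      (1 / 2) * deriv (fun v : ℝ =>
        4 * v ^ 2 / (9 * p ^ 2) *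
          (-(1 - p) ^ 2 * v ^ n + d * v ^ 3 - ρ * p ^ 2)) (u s))
    (hnc : ∃ s t : ℝ, u s ≠ u t) :
    ∃ T > 0, Function.Periodic u T := by
  have hp2 : 0 < 1 - p := by linarith
  have hp0 : p ≠ 0 := ne_of_gt hp
  have hdstar : 0 < ρ ^ p * p ^ p * (1 - p) ^ (1 - p) := by positivity
  have hd0 : 0 < d := lt_trans hdstar hd
  have hn3 : (n : ℝ) * (1 - p) = 3 := by
    rw [div_eq_iff (ne_of_gt hp2)] at hpn
    linarith
  have hncast : (3 : ℝ) < (n : ℝ) := by nlinarith [hn3]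
  have hn4 : 4 ≤ n := by
    have h3n : 3 < n := by exact_mod_cast hncast
    omega
  have hn0 : (0 : ℝ) < (n : ℝ) := by linarith
  have hu1 : Differentiable ℝ u := hu.differentiable (by simp)
  have hu' : ContDiff ℝ ((⊤ : ℕ∞) : WithTop ℕ∞) (deriv u) := by
    have huinf : ContDiff ℝ ((⊤ : ℕ∞) : WithTop ℕ∞) u := hu.of_le (by simp)
    have h := ContDiff.iterate_deriv (𝕜 := ℝ) (F := ℝ) 1 huinf
    simpa using h
  have hu'1 : Differentiable ℝ (deriv u) := hu'.differentiable (by simp)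
  have hu'c : Continuous (deriv u) := hu'1.continuous
  -- the vector field G
  set G : ℝ → ℝ := fun v => (1/2) * (4 * (2*v) / (9 * p ^ 2) *
      (-(1 - p) ^ 2 * v ^ n + d * v ^ 3 - ρ * p ^ 2) +
      4 * v ^ 2 / (9 * p ^ 2) * (-(1 - p) ^ 2 * ((n : ℝ) * v ^ (n-1)) + d * (3 * v ^ 2)))
    with hGdef
  have hΦd : ∀ v : ℝ, HasDerivAt (fun v : ℝ =>
      4 * v ^ 2 / (9 * p ^ 2) *
        (-(1 - p) ^ 2 * v ^ n + d * v ^ 3 - ρ * p ^ 2)) (2 * G v) v := by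
    intro v
    have h1 : HasDerivAt (fun v : ℝ => 4 * v ^ 2 / (9 * p ^ 2)) (4 * (2*v) / (9 * p ^ 2)) v := by
      have := ((hasDerivAt_pow 2 v).const_mul (4:ℝ)).div_const (9 * p ^ 2)
      simpa using this
    have h2 : HasDerivAt (fun v : ℝ => -(1 - p) ^ 2 * v ^ n + d * v ^ 3 - ρ * p ^ 2)
        (-(1 - p) ^ 2 * ((n : ℝ) * v ^ (n-1)) + d * (3 * v ^ 2)) v := by
      have a1 := (hasDerivAt_pow n v).const_mul (-(1 - p) ^ 2 : ℝ)
      have a2 := (hasDerivAt_pow 3 v).const_mul d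
      have := (a1.add a2).sub_const (ρ * p ^ 2)
      exact this.congr_deriv (by push_cast; ring)
    have := h1.mul h2
    exact this.congr_deriv (by rw [hGdef]; ring)
  have hODE2' : ∀ s, deriv (deriv u) s = G (u s) := by
    intro s
    rw [hODE2 s, (hΦd (u s)).deriv]
    ring
  have hGc : ContDiff ℝ 1 G := by
    have hid : ContDiff ℝ 1 (fun v : ℝ => v) := contDiff_id
    have h1 : ContDiff ℝ 1 (fun v : ℝ => 4 * (2*v) / (9 * p ^ 2)) :=
      (contDiff_const.mul (contDiff_const.mul hid)).div_const _
    have h2 : ContDiff ℝ 1 (fun v : ℝ => -(1 - p) ^ 2 * v ^ n + d * v ^ 3 - ρ * p ^ 2) :=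
      ((contDiff_const.mul (hid.pow n)).add (contDiff_const.mul (hid.pow 3))).sub contDiff_const
    have h3 : ContDiff ℝ 1 (fun v : ℝ => 4 * v ^ 2 / (9 * p ^ 2)) :=
      (contDiff_const.mul (hid.pow 2)).div_const _
    have h4 : ContDiff ℝ 1 (fun v : ℝ => -(1 - p) ^ 2 * ((n : ℝ) * v ^ (n-1)) + d * (3 * v ^ 2)) :=
      (contDiff_const.mul (contDiff_const.mul (hid.pow (n-1)))).add
        (contDiff_const.mul (contDiff_const.mul (hid.pow 2)))
    rw [hGdef]
    exact contDiff_const.mul ((h1.mul h2).add (h3.mul h4))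
  -- nonnegativity of Q along u
  have hQ0 : ∀ s, 0 ≤ -(1 - p) ^ 2 * (u s) ^ n + d * (u s) ^ 3 - ρ * p ^ 2 := by
    intro s
    by_contra hlt
    push_neg at hlt
    have hc : 0 < 4 * (u s) ^ 2 / (9 * p ^ 2) :=
      div_pos (by nlinarith [mul_pos (hupos s) (hupos s)]) (by positivity)
    have := mul_neg_of_pos_of_neg hc hlt
    rw [← hODE s] at this
    exact absurd this (not_lt.2 (sq_nonneg _))
  -- upper bound for u
  have hub : ∀ s, u s ≤ max 1 (d / (1 - p) ^ 2) := by
    intro s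
    rcases le_or_gt (u s) 1 with h | h
    · exact le_trans h (le_max_left _ _)
    · refine le_trans ?_ (le_max_right _ _)
      have hq := hQ0 s
      have hpow : (u s) ^ 4 ≤ (u s) ^ n := pow_le_pow_right₀ h.le hn4
      have h3 : (0:ℝ) < (u s) ^ 3 := by positivity
      rw [le_div_iff₀ (by positivity)]
      nlinarith [sq_nonneg (u s), mul_pos hρ (pow_pos hp 2),
        mul_le_mul_of_nonneg_left hpow (sq_nonneg (1-p)), mul_pos (mul_pos h3 hp2) hp2]
  -- lower bound for u
  have hlb : ∀ s, ρ * p ^ 2 / d ≤ (u s) ^ 3 := by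
    intro s
    have hq := hQ0 s
    rw [div_le_iff₀ hd0]
    nlinarith [pow_pos (hupos s) n, sq_nonneg (1 - p)]
  -- bound for deriv u
  obtain ⟨M, hbd⟩ : ∃ M, ∀ s, |u s| ≤ M ∧ |deriv u s| ≤ M := by
    set Mb := max 1 (d / (1 - p) ^ 2) with hMb
    have hMb1 : (1:ℝ) ≤ Mb := le_max_left _ _
    have hsq : ∀ s, (deriv u s) ^ 2 ≤ 4 * Mb ^ 2 / (9 * p ^ 2) * (d * Mb ^ 3) := by
      intro s
      rw [hODE s]
      have h1 : (u s) ^ 2 ≤ Mb ^ 2 := pow_le_pow_left₀ (hupos s).le (hub s) 2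
      have h2 : (u s) ^ 3 ≤ Mb ^ 3 := pow_le_pow_left₀ (hupos s).le (hub s) 3
      have hq := hQ0 s
      have hQle : -(1 - p) ^ 2 * (u s) ^ n + d * (u s) ^ 3 - ρ * p ^ 2 ≤ d * Mb ^ 3 := by
        nlinarith [pow_pos (hupos s) n, sq_nonneg (1-p), mul_pos hρ (pow_pos hp 2),
          mul_le_mul_of_nonneg_left h2 hd0.le]
      have hcle : 4 * (u s) ^ 2 / (9 * p ^ 2) ≤ 4 * Mb ^ 2 / (9 * p ^ 2) := by
        gcongr
      exact mul_le_mul hcle hQle (hQ0 s) (by positivity)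
    refine ⟨max Mb (Real.sqrt (4 * Mb ^ 2 / (9 * p ^ 2) * (d * Mb ^ 3))), fun s => ⟨?_, ?_⟩⟩
    · rw [abs_of_pos (hupos s)]
      exact le_trans (hub s) (le_max_left _ _)
    · exact le_trans (Real.abs_le_sqrt (hsq s)) (le_max_right _ _)
  -- key: zeros of deriv u are unbounded
  have hcrit : ∀ a : ℝ, ∃ s, a < s ∧ deriv u s = 0 := by
    intro a
    by_contra hno
    push_neg at hno
    -- sign is constant on Ioi a
    have hivt : ∀ x y, a < x → a < y → deriv u x < 0 → 0 < deriv u y → False := by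
      intro x y hax hay hx hy
      rcases le_total x y with h | h
      · obtain ⟨c, hc, hc0⟩ := intermediate_value_Icc h hu'c.continuousOn
          (show (0:ℝ) ∈ Icc (deriv u x) (deriv u y) from ⟨hx.le, hy.le⟩)
        exact hno c (lt_of_lt_of_le hax hc.1) hc0
      · obtain ⟨c, hc, hc0⟩ := intermediate_value_Icc' h hu'c.continuousOn
          (show (0:ℝ) ∈ Icc (deriv u x) (deriv u y) from ⟨hx.le, hy.le⟩)
        exact hno c (lt_of_lt_of_le hay hc.1) hc0
    -- convergence of u at infinity
    obtain ⟨L, hL⟩ : ∃ L, Tendsto u atTop (𝓝 L) := by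
      rcases lt_or_gt_of_ne (hno (a+1) (by linarith)) with hneg | hpos
      · -- deriv u < 0 on Ioi a : u antitone, converges to inf
        have hsgn : ∀ s, a < s → deriv u s < 0 := by
          intro s hs
          rcases lt_or_gt_of_ne (hno s hs) with h | h
          · exact h
          · exact absurd (hivt (a+1) s (by linarith) hs hneg h) (fun x => x)
        have hanti : StrictAntiOn u (Ioi a) := by
          apply strictAntiOn_of_deriv_neg (convex_Ioi a) hu.continuous.continuousOn
          intro x hx
          rw [interior_Ioi] at hx
          exact hsgn x hx
        set L := sInf (u '' Ioi a) with hLdef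
        have hbdd : BddBelow (u '' Ioi a) := ⟨0, by rintro _ ⟨x, -, rfl⟩; exact (hupos x).le⟩
        have hne : (u '' Ioi a).Nonempty := ⟨u (a+1), ⟨a+1, by simp, rfl⟩⟩
        refine ⟨L, Metric.tendsto_atTop.2 fun ε hε => ?_⟩
        obtain ⟨_, ⟨x, hx, rfl⟩, hxL⟩ := exists_lt_of_csInf_lt hne
          (show L < L + ε by linarith)
        refine ⟨x + 1, fun s hs => ?_⟩
        have hxs : x < s := by linarith
        have h1 : u s ≤ u x := le_of_lt (hanti hx (by exact lt_trans hx hxs) hxs)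
        have h2 : L ≤ u s := csInf_le hbdd ⟨s, lt_trans hx hxs, rfl⟩
        rw [Real.dist_eq, abs_of_nonneg (by linarith)]
        linarith
      · -- deriv u > 0 on Ioi a : u monotone, converges to sup
        have hsgn : ∀ s, a < s → 0 < deriv u s := by
          intro s hs
          rcases lt_or_gt_of_ne (hno s hs) with h | h
          · exact absurd (hivt s (a+1) hs (by linarith) h hpos) (fun x => x)
          · exact h
        have hmono : StrictMonoOn u (Ioi a) := by
          apply strictMonoOn_of_deriv_pos (convex_Ioi a) hu.continuous.continuousOn
          intro x hx
          rw [interior_Ioi] at hx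
          exact hsgn x hx
        set L := sSup (u '' Ioi a) with hLdef
        have hbdd : BddAbove (u '' Ioi a) :=
          ⟨max 1 (d / (1 - p) ^ 2), by rintro _ ⟨x, -, rfl⟩; exact hub x⟩
        have hne : (u '' Ioi a).Nonempty := ⟨u (a+1), ⟨a+1, by simp, rfl⟩⟩
        refine ⟨L, Metric.tendsto_atTop.2 fun ε hε => ?_⟩
        obtain ⟨_, ⟨x, hx, rfl⟩, hxL⟩ := exists_lt_of_lt_csSup hne
          (show L - ε < L by linarith)
        refine ⟨x + 1, fun s hs => ?_⟩
        have hxs : x < s := by linarith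
        have h1 : u x ≤ u s := le_of_lt (hmono hx (lt_trans hx hxs) hxs)
        have h2 : u s ≤ L := le_csSup hbdd ⟨s, lt_trans hx hxs, rfl⟩
        rw [Real.dist_eq, abs_of_nonpos (by linarith)]
        linarith
    -- L is positive
    have hL3 : ρ * p ^ 2 / d ≤ L ^ 3 :=
      ge_of_tendsto (hL.pow 3) (Eventually.of_forall hlb)
    have hL0 : 0 < L := by
      have hc : (0:ℝ) < ρ * p ^ 2 / d := by positivity
      nlinarith [sq_nonneg L, sq_nonneg (L-1), sq_nonneg (L+1)]
    -- (deriv u)^2 tends to Φ L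
    have hΦcont : Continuous (fun v : ℝ => 4 * v ^ 2 / (9 * p ^ 2) *
        (-(1 - p) ^ 2 * v ^ n + d * v ^ 3 - ρ * p ^ 2)) := by fun_prop
    have hsq_tendsto : Tendsto (fun s => (deriv u s) ^ 2) atTop
        (𝓝 (4 * L ^ 2 / (9 * p ^ 2) * (-(1 - p) ^ 2 * L ^ n + d * L ^ 3 - ρ * p ^ 2))) := by
      have := (hΦcont.tendsto L).comp hL
      apply this.congr
      intro s
      simp only [Function.comp_apply]
      rw [← hODE s]
    -- MVT sequence to show Φ L = 0
    have hmvt : ∀ b : ℝ, ∀ f f' : ℝ → ℝ, (Continuous f) → (∀ x, HasDerivAt f (f' x) x) →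
        ∀ k : ℕ, ∃ c ∈ Ioo (b + k : ℝ) (b + k + 1), f' c = f (b + k + 1) - f (b + k) := by
      intro b f f' hfc hfd k
      obtain ⟨c, hc, hceq⟩ := exists_hasDerivAt_eq_slope f f'
        (show (b + k : ℝ) < b + k + 1 by linarith) hfc.continuousOn (fun x _ => hfd x)
      exact ⟨c, hc, by rw [hceq]; field_simp; ring⟩
    have hnat : Tendsto (fun k : ℕ => a + (k:ℝ)) atTop atTop :=
      tendsto_atTop_add_const_left _ a tendsto_natCast_atTop_atTop
    have hnat1 : Tendsto (fun k : ℕ => a + (k:ℝ) + 1) atTop atTop :=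
      tendsto_atTop_add_const_right _ 1 hnat
    have hdiff0 : ∀ g : ℝ → ℝ, ∀ Lg : ℝ, Tendsto g atTop (𝓝 Lg) →
        Tendsto (fun k : ℕ => g (a + k + 1) - g (a + k)) atTop (𝓝 0) := by
      intro g Lg hg
      have h1 := hg.comp hnat1
      have h2 := hg.comp hnat
      have := h1.sub h2
      simpa using this
    obtain ⟨c, hc, hceq⟩ : ∃ c : ℕ → ℝ, (∀ k : ℕ, c k ∈ Ioo (a + (k:ℝ)) (a + (k:ℝ) + 1)) ∧
        (∀ k, deriv u (c k) = u (a + k + 1) - u (a + k)) := by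
      choose c h1 h2 using hmvt a u (deriv u) hu.continuous (fun x => (hu1 x).hasDerivAt)
      exact ⟨c, h1, h2⟩
    have hctop : Tendsto c atTop atTop :=
      tendsto_atTop_mono (fun k => (hc k).1.le) hnat
    have hc0 : Tendsto (fun k => deriv u (c k)) atTop (𝓝 0) := by
      have := hdiff0 u L hL
      apply this.congr
      intro k
      exact (hceq k).symm
    have hΦL : 4 * L ^ 2 / (9 * p ^ 2) * (-(1 - p) ^ 2 * L ^ n + d * L ^ 3 - ρ * p ^ 2) = 0 := by
      have h1 : Tendsto (fun k => (deriv u (c k)) ^ 2) atTop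
          (𝓝 (4 * L ^ 2 / (9 * p ^ 2) * (-(1 - p) ^ 2 * L ^ n + d * L ^ 3 - ρ * p ^ 2))) :=
        hsq_tendsto.comp hctop
      have h2 : Tendsto (fun k => (deriv u (c k)) ^ 2) atTop (𝓝 0) := by
        have := hc0.pow 2
        simpa using this
      exact tendsto_nhds_unique h1 h2
    have hQL : -(1 - p) ^ 2 * L ^ n + d * L ^ 3 - ρ * p ^ 2 = 0 := by
      rcases mul_eq_zero.1 hΦL with h | h
      · exact absurd h (by positivity)
      · exact h
    -- deriv u tends to 0
    have hu'0 : Tendsto (deriv u) atTop (𝓝 0) := by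
      rw [tendsto_zero_iff_abs_tendsto_zero]
      have h1 : Tendsto (fun s => (deriv u s) ^ 2) atTop (𝓝 0) := by
        rw [hQL] at hsq_tendsto
        simpa using hsq_tendsto
      have h2 := (Real.continuous_sqrt.tendsto 0).comp h1
      rw [Real.sqrt_zero] at h2
      apply h2.congr
      intro s
      simp [Function.comp, Real.sqrt_sq_eq_abs]
    -- deriv (deriv u) tends to G L
    have hu''t : Tendsto (fun s => deriv (deriv u) s) atTop (𝓝 (G L)) := by
      have := (hGc.continuous.tendsto L).comp hL
      apply this.congr
      intro s
      simp only [Function.comp_apply]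
      exact (hODE2' s).symm
    -- G L = 0 via MVT on deriv u
    have hGL0 : G L = 0 := by
      obtain ⟨e, he, heeq⟩ : ∃ e : ℕ → ℝ, (∀ k : ℕ, e k ∈ Ioo (a + (k:ℝ)) (a + (k:ℝ) + 1)) ∧
          (∀ k, deriv (deriv u) (e k) = deriv u (a + k + 1) - deriv u (a + k)) := by
        choose e h1 h2 using hmvt a (deriv u) (deriv (deriv u)) hu'c
          (fun x => (hu'1 x).hasDerivAt)
        exact ⟨e, h1, h2⟩
      have hetop : Tendsto e atTop atTop :=
        tendsto_atTop_mono (fun k => (he k).1.le) hnat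
      have h1 : Tendsto (fun k => deriv (deriv u) (e k)) atTop (𝓝 (G L)) :=
        hu''t.comp hetop
      have h2 : Tendsto (fun k => deriv (deriv u) (e k)) atTop (𝓝 0) := by
        have := hdiff0 (deriv u) 0 hu'0
        apply this.congr
        intro k
        exact (heeq k).symm
      exact tendsto_nhds_unique h1 h2
    -- but G L ≠ 0 : algebra with d > d_*
    -- step 1 : Q'(L) = 0
    have hW : -(1 - p) ^ 2 * ((n:ℝ) * L ^ (n-1)) + d * (3 * L ^ 2) = 0 := by
      rw [hGdef] at hGL0
      simp only at hGL0
      rw [hQL] at hGL0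
      have hcoef : 4 * L ^ 2 / (9 * p ^ 2) ≠ 0 := by positivity
      have h2 : 4 * L ^ 2 / (9 * p ^ 2) *
          (-(1 - p) ^ 2 * ((n:ℝ) * L ^ (n-1)) + d * (3 * L ^ 2)) = 0 := by
        linear_combination 2 * hGL0
      rcases mul_eq_zero.1 h2 with h | h
      · exact absurd h hcoef
      · exact h
    have hLpow : L ^ (n-1) * L = L ^ n := by
      rw [← pow_succ]
      congr 1
      omega
    have hmul : 3 * d * L ^ 3 = (1 - p) ^ 2 * (n:ℝ) * L ^ n := by
      linear_combination L * hW + (1 - p) ^ 2 * (n:ℝ) * hLpow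
    have hnp : (n:ℝ) * p = (n:ℝ) - 3 := by linear_combination -hn3
    have e1 : d * L ^ 3 = (1 - p) ^ 2 * L ^ n + ρ * p ^ 2 := by linear_combination hQL
    have e4 : (n:ℝ) * p * ((1 - p) ^ 2 * L ^ n) = 3 * ρ * p ^ 2 := by
      linear_combination 3 * e1 - hmul + ((1 - p) ^ 2 * L ^ n) * hnp
    have hY : (1 - p) ^ 2 * L ^ n = ρ * p * (1 - p) := by
      have hnp0 : (n:ℝ) * p ≠ 0 := by positivity
      apply mul_left_cancel₀ hnp0
      rw [e4]
      linear_combination (-(ρ * p ^ 2)) * hn3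
    have hA : L ^ n = ρ * p / (1 - p) := by
      rw [eq_div_iff (ne_of_gt hp2)]
      have h1p : (1 - p) ≠ 0 := ne_of_gt hp2
      field_simp at hY ⊢
      nlinarith [hY]
    have hB : L ^ 3 = ρ * p / d := by
      rw [eq_div_iff (ne_of_gt hd0)]
      linear_combination e1 + hY
    -- combine powers
    have hcomb : (ρ * p / d) ^ n = (ρ * p / (1 - p)) ^ 3 := by
      rw [← hA, ← hB, ← pow_mul, ← pow_mul, Nat.mul_comm]
    rw [div_pow, div_pow, div_eq_div_iff (by positivity) (by positivity)] at hcomb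
    -- hcomb : (ρ*p)^n * (1-p)^3 = (ρ*p)^3 * d^n
    have hsplit : (ρ * p) ^ n = (ρ * p) ^ (n - 3) * (ρ * p) ^ 3 := by
      rw [← pow_add]
      congr 1
      omega
    have hdn : d ^ n = (ρ * p) ^ (n - 3) * (1 - p) ^ 3 := by
      have hc3 : (ρ * p) ^ 3 ≠ 0 := by positivity
      apply mul_right_cancel₀ hc3
      rw [hsplit] at hcomb
      linear_combination -hcomb
    -- d_* ^ n equals the same
    have hdsn : (ρ ^ p * p ^ p * (1 - p) ^ (1 - p)) ^ n = (ρ * p) ^ (n - 3) * (1 - p) ^ 3 := by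
      have hcast3 : ((n - 3 : ℕ) : ℝ) = (n : ℝ) - 3 := by
        have : 3 ≤ n := by omega
        push_cast [this]
        ring
      have c1 : (ρ ^ p) ^ n = ρ ^ (n - 3 : ℕ) := by
        rw [← Real.rpow_natCast (ρ ^ p) n, ← Real.rpow_natCast ρ (n - 3),
          ← Real.rpow_mul hρ.le, hcast3]
        congr 1
        linarith [hnp]
      have c2 : (p ^ p) ^ n = p ^ (n - 3 : ℕ) := by
        rw [← Real.rpow_natCast (p ^ p) n, ← Real.rpow_natCast p (n - 3),
          ← Real.rpow_mul hp.le, hcast3]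
        congr 1
        linarith [hnp]
      have c3 : ((1 - p) ^ (1 - p)) ^ n = (1 - p) ^ (3 : ℕ) := by
        rw [← Real.rpow_natCast ((1 - p) ^ (1 - p)) n, ← Real.rpow_natCast (1 - p) 3,
          ← Real.rpow_mul hp2.le]
        congr 1
        push_cast
        linarith [hn3]
      rw [mul_pow, mul_pow, c1, c2, c3, mul_pow]
    have : d ^ n = (ρ ^ p * p ^ p * (1 - p) ^ (1 - p)) ^ n := by rw [hdn, hdsn]
    have hlt : (ρ ^ p * p ^ p * (1 - p) ^ (1 - p)) ^ n < d ^ n :=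
      pow_lt_pow_left₀ hd hdstar.le (by omega)
    linarith [this, hlt]
  -- conclude periodicity
  obtain ⟨s₀, -, h0⟩ := hcrit 0
  obtain ⟨s₁, hs01, h1⟩ := hcrit s₀
  have r0 := reflect_of_deriv_zero u G hu hGc hODE2' M hbd s₀ h0
  have r1 := reflect_of_deriv_zero u G hu hGc hODE2' M hbd s₁ h1
  refine ⟨2 * (s₁ - s₀), by linarith, fun t => ?_⟩
  have e1 : u (t + 2 * (s₁ - s₀)) = u (2 * s₁ - (2 * s₀ - t)) := by
    congr 1
    ring
  rw [e1, r1 (2 * s₀ - t), r0 t]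
end

section
/- Fix p ∈ (0,1) with 3/(1−p) = n+1, ρ > 0, and d > d_*. Let β < α be the two positive roots of Q(u) = −(1−p)²u^{n+1} + du³ − ρp². Then the improper integral I(d) = 3p(1−p)√(ρd) ∫_β^α u^{(4−p)/(2(1−p))} / ((du³ − ρp²)·√(Q(u))) du converges, and I is continuous as a function of d on (d_*, ∞). -/
/-!
Write `Q(u) = u³ (d - h u)` with `h u = (1 - p)² u^(n-2) + ρ p² u⁻³`, which is strictly convex on
`(0, ∞)`. The roots `β d < α d` are then the endpoints of the sublevel set `{h < d}`, and strict
convexity alone makes them continuous in `d`. Concavity of `d - h` gives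
`Q(β + (α - β) t) ≥ 2 β³ (d - h ((β + α) / 2)) t (1 - t)`, so the integrand is dominated by a
multiple of `((u - β) (α - u))^(-1/2)`, which is integrable. After the substitution
`u = β + (α - β) t` the same bound holds locally uniformly in `d`, and dominated convergence gives
continuity.
-/

open MeasureTheory Set Filter Topology

section SublevelSet

variable {s : Set ℝ} {h : ℝ → ℝ} {a b u : ℝ}

theorem StrictConvexOn.lt_iff_mem_Ioo (hf : StrictConvexOn ℝ s h) (ha : a ∈ s) (hb : b ∈ s)
    (hu : u ∈ s) (hab : a < b) (heq : h a = h b) : h u < h a ↔ u ∈ Ioo a b := by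
  refine ⟨fun hlt => ?_, fun ⟨hau, hub⟩ => ?_⟩
  · by_contra hmem
    rcases not_and_or.1 hmem with hua | hbu
    · rcases (not_lt.1 hua).lt_or_eq with hua | rfl
      · have := hf.secant_strict_mono_aux1 hu hb hua hab
        nlinarith
      · exact lt_irrefl _ hlt
    · rcases (not_lt.1 hbu).lt_or_eq with hbu | rfl
      · have := hf.secant_strict_mono_aux1 ha hu hab hbu
        nlinarith
      · exact lt_irrefl _ (heq ▸ hlt)
  · have := hf.secant_strict_mono_aux1 ha hb hau hub
    nlinarith

theorem StrictConvexOn.le_iff_mem_Icc (hf : StrictConvexOn ℝ s h) (ha : a ∈ s) (hb : b ∈ s)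
    (hu : u ∈ s) (hab : a < b) (heq : h a = h b) : h u ≤ h a ↔ u ∈ Icc a b := by
  refine ⟨fun hle => ?_, fun ⟨hau, hub⟩ => ?_⟩
  · by_contra hmem
    rcases not_and_or.1 hmem with hua | hbu
    · have := hf.secant_strict_mono_aux1 hu hb (not_le.1 hua) hab
      nlinarith
    · have := hf.secant_strict_mono_aux1 ha hu hab (not_le.1 hbu)
      nlinarith
  · rcases hau.lt_or_eq with hau | rfl
    · rcases hub.lt_or_eq with hub | rfl
      · exact ((hf.lt_iff_mem_Ioo ha hb hu hab heq).2 ⟨hau, hub⟩).le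
      · exact heq.ge
    · exact le_rfl

variable {β α : ℝ → ℝ} {d₀ : ℝ}

theorem StrictConvexOn.continuousAt_sublevel_endpoints (hf : StrictConvexOn ℝ (Ioi 0) h)
    (hroots : ∀ᶠ d in 𝓝 d₀, 0 < β d ∧ β d < α d ∧ h (β d) = d ∧ h (α d) = d) :
    ContinuousAt β d₀ ∧ ContinuousAt α d₀ := by
  obtain ⟨hβ0, hβα, hβ, hα⟩ := hroots.self_of_nhds
  have hα0 : 0 < α d₀ := hβ0.trans hβα
  have hin : ∀ y ∈ Ioo (β d₀) (α d₀), ∀ᶠ d in 𝓝 d₀, y ∈ Ioo (β d) (α d) := by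
    intro y hy
    have hy0 : 0 < y := hβ0.trans hy.1
    have hlt : h y < d₀ := hβ ▸ (hf.lt_iff_mem_Ioo hβ0 hα0 hy0 hβα (hβ.trans hα.symm)).2 hy
    filter_upwards [hroots, eventually_gt_nhds hlt] with d ⟨hd0, hdβα, hdβ, hdα⟩ hd
    exact (hf.lt_iff_mem_Ioo hd0 (hd0.trans hdβα) hy0 hdβα (hdβ.trans hdα.symm)).1 (hdβ.symm ▸ hd)
  have hout : ∀ x, 0 < x → x ∉ Icc (β d₀) (α d₀) → ∀ᶠ d in 𝓝 d₀, x ∉ Icc (β d) (α d) := by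
    intro x hx0 hx
    have hgt : d₀ < h x := by
      rw [← not_le, ← hβ, hf.le_iff_mem_Icc hβ0 hα0 hx0 hβα (hβ.trans hα.symm)]
      exact hx
    filter_upwards [hroots, eventually_lt_nhds hgt] with d ⟨hd0, hdβα, hdβ, hdα⟩ hd
    rw [← hf.le_iff_mem_Icc hd0 (hd0.trans hdβα) hx0 hdβα (hdβ.trans hdα.symm), hdβ, not_le]
    exact hd
  obtain ⟨m, hm⟩ := exists_between hβα
  refine ⟨tendsto_order.2 ⟨fun x hx => ?_, fun y hy => ?_⟩,
    tendsto_order.2 ⟨fun x hx => ?_, fun y hy => ?_⟩⟩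
  · rcases le_or_gt x 0 with hx0 | hx0
    · filter_upwards [hroots] with d hd using hx0.trans_lt hd.1
    · filter_upwards [hout x hx0 fun h => hx.not_ge h.1, hin m hm] with d hd hmd
      by_contra hxd
      exact hd ⟨not_lt.1 hxd, by linarith [hmd.2, hm.1]⟩
  · filter_upwards [hin (min y m) ⟨lt_min hy hm.1, (min_le_right _ _).trans_lt hm.2⟩] with d hd
    exact hd.1.trans_le (min_le_left _ _)
  · filter_upwards [hin (max x m) ⟨hm.1.trans_le (le_max_right _ _), max_lt hx hm.2⟩] with d hd
    exact (le_max_left _ _).trans_lt hd.2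
  · filter_upwards [hout y (hα0.trans hy) fun h => hy.not_ge h.2, hin m hm] with d hd hmd
    by_contra hyd
    exact hd ⟨by linarith [hmd.1, hm.2], not_lt.1 hyd⟩

end SublevelSet

theorem ConcaveOn.two_mul_mul_one_sub_mul_le {s : Set ℝ} {g : ℝ → ℝ} (hg : ConcaveOn ℝ s g)
    {a b t : ℝ} (ha : a ∈ s) (hb : b ∈ s) (hga : 0 ≤ g a) (hgb : 0 ≤ g b) (ht0 : 0 ≤ t)
    (ht1 : t ≤ 1) : 2 * (t * (1 - t)) * g ((a + b) / 2) ≤ g (a + (b - a) * t) := by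
  have hm : (a + b) / 2 ∈ s := by
    convert hg.1.add_smul_sub_mem ha hb (t := 1 / 2) ⟨by norm_num, by norm_num⟩ using 1
    simp only [smul_eq_mul]; ring
  have hgm : 0 ≤ g ((a + b) / 2) := by
    have := hg.2 ha hb (by norm_num : (0 : ℝ) ≤ 1 / 2) (by norm_num : (0 : ℝ) ≤ 1 / 2)
      (by norm_num)
    simp only [smul_eq_mul] at this
    calc 0 ≤ 1 / 2 * g a + 1 / 2 * g b := by positivity
      _ ≤ _ := this
      _ = _ := by congr 1; ring
  rcases le_total t (1 / 2) with ht | ht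
  · have := hg.2 ha hm (by linarith : 0 ≤ 1 - 2 * t) (by linarith : 0 ≤ 2 * t) (by ring)
    simp only [smul_eq_mul] at this
    calc 2 * (t * (1 - t)) * g ((a + b) / 2)
        ≤ (1 - 2 * t) * g a + 2 * t * g ((a + b) / 2) := by
          nlinarith [mul_nonneg (by linarith : 0 ≤ 1 - 2 * t) hga, mul_nonneg (sq_nonneg t) hgm]
      _ ≤ _ := this
      _ = _ := by congr 1; ring
  · have := hg.2 hb hm (by linarith : 0 ≤ 2 * t - 1) (by linarith : 0 ≤ 2 - 2 * t) (by ring)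
    simp only [smul_eq_mul] at this
    calc 2 * (t * (1 - t)) * g ((a + b) / 2)
        ≤ (2 * t - 1) * g b + (2 - 2 * t) * g ((a + b) / 2) := by
          nlinarith [mul_nonneg (by linarith : 0 ≤ 2 * t - 1) hgb,
            mul_nonneg (sq_nonneg (1 - t)) hgm]
      _ ≤ _ := this
      _ = _ := by congr 1; ring

theorem inv_sqrt_mul_le_inv_sqrt_add_inv_sqrt {x y : ℝ} (hx : 0 < x) (hy : 0 < y) :
    (√(x * y))⁻¹ ≤ (√(x + y))⁻¹ * ((√x)⁻¹ + (√y)⁻¹) := by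
  have hsx := Real.sqrt_pos.2 hx
  have hsy := Real.sqrt_pos.2 hy
  have hsum : √(x + y) ≤ √x + √y := by
    rw [Real.sqrt_le_left (by positivity)]
    nlinarith [Real.sq_sqrt hx.le, Real.sq_sqrt hy.le]
  rw [Real.sqrt_mul hx.le, inv_add_inv hsx.ne' hsy.ne']
  calc (√x * √y)⁻¹ = (√x * √y)⁻¹ * 1 := (mul_one _).symm
    _ ≤ (√x * √y)⁻¹ * ((√x + √y) / √(x + y)) := by
      gcongr
      rwa [one_le_div (by positivity)]
    _ = _ := by ring

theorem integrableOn_inv_sqrt_sub_mul_sub (a b : ℝ) :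
    IntegrableOn (fun u => (√((u - a) * (b - u)))⁻¹) (Ioo a b) := by
  rcases le_or_gt b a with hba | hab
  · simp [Ioo_eq_empty_of_le hba]
  have hr : (-1 : ℝ) < -(1 / 2) := by norm_num
  have hleft : IntegrableOn (fun u => (√(u - a))⁻¹) (Ioo a b) := by
    have := ((intervalIntegral.intervalIntegrable_rpow' hr).comp_sub_right a (a := 0) (b := b - a))
    simp only [zero_add, sub_add_cancel] at this
    refine ((intervalIntegrable_iff_integrableOn_Ioc_of_le hab.le).1 this).mono_set
      Ioo_subset_Ioc_self |>.congr_fun (fun u hu => ?_) measurableSet_Ioo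
    rw [Real.sqrt_eq_rpow, ← Real.rpow_neg (sub_pos.2 hu.1).le]
  have hright : IntegrableOn (fun u => (√(b - u))⁻¹) (Ioo a b) := by
    have := ((intervalIntegral.intervalIntegrable_rpow' hr).comp_sub_left b (a := b - a) (b := 0))
    simp only [sub_sub_cancel, sub_zero] at this
    refine ((intervalIntegrable_iff_integrableOn_Ioc_of_le hab.le).1 this).mono_set
      Ioo_subset_Ioc_self |>.congr_fun (fun u hu => ?_) measurableSet_Ioo
    rw [Real.sqrt_eq_rpow, ← Real.rpow_neg (sub_pos.2 hu.2).le]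
  refine ((hleft.add hright).const_mul (√(b - a))⁻¹).mono' (by fun_prop) ?_
  refine (ae_restrict_iff' measurableSet_Ioo).2 (ae_of_all _ fun u hu => ?_)
  have h := inv_sqrt_mul_le_inv_sqrt_add_inv_sqrt (sub_pos.2 hu.1) (sub_pos.2 hu.2)
  rw [sub_add_sub_cancel'] at h
  simpa [abs_of_nonneg] using h

theorem setIntegral_Ioo_eq_mul_setIntegral_Ioo_zero_one (f : ℝ → ℝ) {a b : ℝ} (hab : a ≤ b) :
    ∫ u in Ioo a b, f u = (b - a) * ∫ t in Ioo 0 1, f (a + (b - a) * t) := by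
  rw [← integral_Ioc_eq_integral_Ioo, ← integral_Ioc_eq_integral_Ioo,
    ← intervalIntegral.integral_of_le hab, ← intervalIntegral.integral_of_le zero_le_one,
    ← smul_eq_mul, intervalIntegral.smul_integral_comp_add_mul]
  simp

noncomputable def rootPoly (c k : ℝ) (n : ℕ) (d u : ℝ) : ℝ := -c * u ^ (n + 1) + d * u ^ 3 - k

noncomputable def rootLevel (c k : ℝ) (n : ℕ) (u : ℝ) : ℝ := c * u ^ (n - 2) + k * u ^ (-3 : ℤ)

noncomputable def rootIntegrand (γ c k : ℝ) (n : ℕ) (d u : ℝ) : ℝ :=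
  u ^ γ / ((d * u ^ 3 - k) * √(rootPoly c k n d u))

section Roots

variable {γ c k d : ℝ} {n : ℕ}

theorem rootPoly_eq_mul_sub_rootLevel (hn : 2 ≤ n) {u : ℝ} (hu : u ≠ 0) :
    rootPoly c k n d u = u ^ 3 * (d - rootLevel c k n u) := by
  obtain ⟨m, rfl⟩ := Nat.exists_eq_add_of_le hn
  simp only [rootPoly, rootLevel, Nat.add_sub_cancel_left, zpow_neg, zpow_ofNat]
  field_simp
  ring

theorem mul_pow_three_sub_eq_rootPoly_add (c : ℝ) (n : ℕ) (u : ℝ) :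
    d * u ^ 3 - k = rootPoly c k n d u + c * u ^ (n + 1) := by
  unfold rootPoly; ring

theorem rootLevel_eq_of_rootPoly_eq_zero (hn : 2 ≤ n) {u : ℝ} (hu : u ≠ 0)
    (h : rootPoly c k n d u = 0) : rootLevel c k n u = d := by
  rw [rootPoly_eq_mul_sub_rootLevel hn hu] at h
  linarith [(mul_eq_zero.1 h).resolve_left (pow_ne_zero 3 hu)]

theorem strictConvexOn_rootLevel (hc : 0 ≤ c) (hk : 0 < k) :
    StrictConvexOn ℝ (Ioi 0) (rootLevel c k n) := by
  have hpow : ConvexOn ℝ (Ioi 0) fun u : ℝ => c • u ^ (n - 2) :=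
    ((convexOn_pow (n - 2)).subset Ioi_subset_Ici_self (convex_Ioi 0)).smul hc
  have hzpow : StrictConvexOn ℝ (Ioi 0) fun u : ℝ => k * u ^ (-3 : ℤ) := by
    refine ⟨convex_Ioi 0, fun x hx y hy hxy a b ha hb hab => ?_⟩
    have := (strictConvexOn_zpow (m := -3) (by norm_num) (by norm_num)).2 hx hy hxy ha hb hab
    simp only [smul_eq_mul] at this ⊢
    nlinarith
  exact hzpow.add_convexOn hpow |>.congr fun u _ => by simp [rootLevel, add_comm]

theorem rootLevel_lt_of_mem_Ioo (hc : 0 ≤ c) (hk : 0 < k) {a b u : ℝ} (ha : 0 < a)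
    (hab : a < b) (hfa : rootLevel c k n a = d) (hfb : rootLevel c k n b = d)
    (hu : u ∈ Ioo a b) : rootLevel c k n u < d :=
  hfa ▸ ((strictConvexOn_rootLevel hc hk).lt_iff_mem_Ioo ha (ha.trans hab) (ha.trans hu.1) hab
    (hfa.trans hfb.symm)).2 hu

theorem rootPoly_pos (hn : 2 ≤ n) (hc : 0 ≤ c) (hk : 0 < k) {a b u : ℝ} (ha : 0 < a)
    (hab : a < b) (hfa : rootLevel c k n a = d) (hfb : rootLevel c k n b = d)
    (hu : u ∈ Ioo a b) : 0 < rootPoly c k n d u := by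
  have hu0 : 0 < u := ha.trans hu.1
  rw [rootPoly_eq_mul_sub_rootLevel hn hu0.ne']
  exact mul_pos (pow_pos hu0 3) (sub_pos.2 (rootLevel_lt_of_mem_Ioo hc hk ha hab hfa hfb hu))

theorem mul_le_rootPoly (hn : 2 ≤ n) (hc : 0 ≤ c) (hk : 0 < k) {a b t : ℝ} (ha : 0 < a)
    (hab : a < b) (hfa : rootLevel c k n a = d) (hfb : rootLevel c k n b = d)
    (ht : t ∈ Icc (0 : ℝ) 1) :
    2 * a ^ 3 * (d - rootLevel c k n ((a + b) / 2)) * (t * (1 - t)) ≤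
      rootPoly c k n d (a + (b - a) * t) := by
  have hb : 0 < b := ha.trans hab
  have hconc : ConcaveOn ℝ (Ioi 0) fun u => d - rootLevel c k n u :=
    (concaveOn_const d (convex_Ioi 0)).sub (strictConvexOn_rootLevel hc hk).convexOn
  have hgm : 0 < d - rootLevel c k n ((a + b) / 2) :=
    sub_pos.2 (rootLevel_lt_of_mem_Ioo hc hk ha hab hfa hfb ⟨by linarith, by linarith⟩)
  have hgu := hconc.two_mul_mul_one_sub_mul_le ha hb (by simp [hfa]) (by simp [hfb]) ht.1 ht.2
  have hau : a ≤ a + (b - a) * t := le_add_of_nonneg_right (by nlinarith [ht.1])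
  have ht1 : 0 ≤ t * (1 - t) := mul_nonneg ht.1 (sub_nonneg.2 ht.2)
  rw [rootPoly_eq_mul_sub_rootLevel hn (ha.trans_le hau).ne']
  calc 2 * a ^ 3 * (d - rootLevel c k n ((a + b) / 2)) * (t * (1 - t))
      = a ^ 3 * (2 * (t * (1 - t)) * (d - rootLevel c k n ((a + b) / 2))) := by ring
    _ ≤ a ^ 3 * (d - rootLevel c k n (a + (b - a) * t)) := by gcongr
    _ ≤ _ := by
      gcongr
      exact (by positivity : (0 : ℝ) ≤ _).trans hgu

theorem measurable_rootIntegrand : Measurable (rootIntegrand γ c k n d) := by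
  unfold rootIntegrand rootPoly
  fun_prop

theorem norm_rootIntegrand_le (hc : 0 < c) {u L M q : ℝ} (hL : 0 < L) (hLu : L ≤ u)
    (hM : |u ^ γ| ≤ M) (hq : 0 < q) (hqQ : q ≤ rootPoly c k n d u) :
    ‖rootIntegrand γ c k n d u‖ ≤ M / (c * L ^ (n + 1) * √q) := by
  have hden : c * L ^ (n + 1) ≤ d * u ^ 3 - k := by
    rw [mul_pow_three_sub_eq_rootPoly_add c n]
    have := pow_le_pow_left₀ hL.le hLu (n + 1)
    nlinarith
  have hden0 : 0 < d * u ^ 3 - k := (by positivity : 0 < c * L ^ (n + 1)).trans_le hden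
  have hpos : 0 < (d * u ^ 3 - k) * √(rootPoly c k n d u) :=
    mul_pos hden0 (Real.sqrt_pos.2 (hq.trans_le hqQ))
  rw [rootIntegrand, Real.norm_eq_abs, abs_div, abs_of_pos hpos]
  gcongr
  exact (abs_nonneg _).trans hM

theorem continuousAt_rootIntegrand_comp (hc : 0 ≤ c) {u : ℝ → ℝ} {d₀ : ℝ} (hu : ContinuousAt u d₀)
    (hu0 : 0 < u d₀) (hQ : 0 < rootPoly c k n d₀ (u d₀)) :
    ContinuousAt (fun d => rootIntegrand γ c k n d (u d)) d₀ := by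
  have hden : 0 < d₀ * u d₀ ^ 3 - k := by
    rw [mul_pow_three_sub_eq_rootPoly_add c n]
    positivity
  unfold rootIntegrand rootPoly at *
  exact (hu.rpow_const (Or.inl hu0.ne')).div (by fun_prop) (by positivity)

end Roots

section Integral

variable {γ c k : ℝ} {n : ℕ}

theorem integrableOn_rootIntegrand (hn : 2 ≤ n) (hc : 0 < c) (hk : 0 < k) {a b d : ℝ}
    (ha : 0 < a) (hab : a < b) (hfa : rootLevel c k n a = d) (hfb : rootLevel c k n b = d) :
    IntegrableOn (rootIntegrand γ c k n d) (Ioo a b) := by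
  obtain ⟨M, hM⟩ := isCompact_Icc.exists_bound_of_continuousOn (s := Icc a b)
    (f := fun u : ℝ => u ^ γ) fun u hu => (Real.continuousAt_rpow_const _ _
      (Or.inl (ha.trans_le hu.1).ne')).continuousWithinAt
  set K := 2 * a ^ 3 * (d - rootLevel c k n ((a + b) / 2)) / (b - a) ^ 2
  have hK : 0 < K := by
    have := rootLevel_lt_of_mem_Ioo hc.le hk ha hab hfa hfb (u := (a + b) / 2)
      ⟨by linarith, by linarith⟩
    have := sub_pos.2 hab
    positivity
  have hbound : ∀ u ∈ Ioo a b,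
      ‖rootIntegrand γ c k n d u‖ ≤ M / (c * a ^ (n + 1) * √K) * (√((u - a) * (b - u)))⁻¹ := by
    intro u hu
    have hba : 0 < b - a := sub_pos.2 hab
    have hq : K * ((u - a) * (b - u)) ≤ rootPoly c k n d u := by
      have := mul_le_rootPoly hn hc.le hk ha hab hfa hfb (t := (u - a) / (b - a))
        ⟨div_nonneg (sub_pos.2 hu.1).le hba.le, (div_le_one hba).2 (by linarith [hu.2])⟩
      rwa [show a + (b - a) * ((u - a) / (b - a)) = u by field_simp; ring,
        show 2 * a ^ 3 * (d - rootLevel c k n ((a + b) / 2)) *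
          ((u - a) / (b - a) * (1 - (u - a) / (b - a))) = K * ((u - a) * (b - u)) by
          simp only [K]; field_simp; ring] at this
    have hXY : 0 < (u - a) * (b - u) := mul_pos (sub_pos.2 hu.1) (sub_pos.2 hu.2)
    convert norm_rootIntegrand_le hc ha hu.1.le (hM u (Ioo_subset_Icc_self hu)) (by positivity) hq
      using 1
    rw [Real.sqrt_mul hK.le]
    field_simp
  exact ((integrableOn_inv_sqrt_sub_mul_sub a b).const_mul _).mono'
    measurable_rootIntegrand.aestronglyMeasurable
    ((ae_restrict_iff' measurableSet_Ioo).2 (ae_of_all _ hbound))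

variable {β α : ℝ → ℝ} {d₀ : ℝ}

theorem eventually_norm_rootIntegrand_le (hn : 2 ≤ n) (hc : 0 < c) (hk : 0 < k)
    (hroots : ∀ᶠ d in 𝓝 d₀, 0 < β d ∧ β d < α d ∧ rootLevel c k n (β d) = d ∧
      rootLevel c k n (α d) = d)
    (hβ : ContinuousAt β d₀) (hα : ContinuousAt α d₀) :
    ∃ C, ∀ᶠ d in 𝓝 d₀, ∀ t ∈ Ioo (0 : ℝ) 1,
      ‖rootIntegrand γ c k n d (β d + (α d - β d) * t)‖ ≤ C * (√(t * (1 - t)))⁻¹ := by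
  obtain ⟨hβ0, hβα, hfβ, hfα⟩ := hroots.self_of_nhds
  obtain ⟨L, hL, hLβ⟩ := exists_between hβ0
  obtain ⟨U, hαU⟩ := exists_gt (α d₀)
  obtain ⟨M, hM⟩ := isCompact_Icc.exists_bound_of_continuousOn (s := Icc L U)
    (f := fun u : ℝ => u ^ γ) fun u hu => (Real.continuousAt_rpow_const _ _
      (Or.inl (hL.trans_le hu.1).ne')).continuousWithinAt
  set g := fun d => d - rootLevel c k n ((β d + α d) / 2)
  have hg0 : 0 < g d₀ :=
    sub_pos.2 (rootLevel_lt_of_mem_Ioo hc.le hk hβ0 hβα hfβ hfα ⟨by linarith, by linarith⟩)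
  have hg : ContinuousAt g d₀ :=
    continuousAt_id.sub (((strictConvexOn_rootLevel hc.le hk).convexOn.continuousOn isOpen_Ioi
      |>.continuousAt (Ioi_mem_nhds (by linarith))).comp ((hβ.add hα).div_const 2))
  refine ⟨M / (c * L ^ (n + 1) * √(L ^ 3 * g d₀)), ?_⟩
  filter_upwards [hroots, hβ.eventually_const_lt hLβ, hα.eventually_lt_const hαU,
    hg.eventually_const_lt (by linarith : g d₀ / 2 < g d₀)]
    with d ⟨hd0, hdβα, hdβ, hdα⟩ hLd hUd hgd t ht
  have hu : β d + (α d - β d) * t ∈ Ioo (β d) (α d) :=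
    ⟨by nlinarith [ht.1], by nlinarith [ht.2]⟩
  have ht1 : 0 < t * (1 - t) := mul_pos ht.1 (sub_pos.2 ht.2)
  have hq : L ^ 3 * g d₀ * (t * (1 - t)) ≤ rootPoly c k n d (β d + (α d - β d) * t) := by
    refine le_trans ?_ (mul_le_rootPoly hn hc.le hk hd0 hdβα hdβ hdα (Ioo_subset_Icc_self ht))
    change L ^ 3 * g d₀ * (t * (1 - t)) ≤ 2 * β d ^ 3 * g d * (t * (1 - t))
    refine mul_le_mul_of_nonneg_right ?_ ht1.le
    calc L ^ 3 * g d₀ ≤ β d ^ 3 * (2 * g d) :=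
          mul_le_mul (pow_le_pow_left₀ hL.le hLd.le 3) (by linarith) hg0.le (by positivity)
      _ = 2 * β d ^ 3 * g d := by ring
  convert norm_rootIntegrand_le hc hL (hLd.le.trans hu.1.le)
    (hM _ ⟨hLd.le.trans hu.1.le, hu.2.le.trans hUd.le⟩)
    (mul_pos (mul_pos (pow_pos hL 3) hg0) ht1) hq using 1
  rw [Real.sqrt_mul (by positivity : (0 : ℝ) ≤ L ^ 3 * g d₀) (t * (1 - t))]
  field_simp

theorem continuousAt_integral_rootIntegrand (hn : 2 ≤ n) (hc : 0 < c) (hk : 0 < k)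
    (hroots : ∀ᶠ d in 𝓝 d₀, 0 < β d ∧ β d < α d ∧ rootLevel c k n (β d) = d ∧
      rootLevel c k n (α d) = d) :
    ContinuousAt (fun d => ∫ u in Ioo (β d) (α d), rootIntegrand γ c k n d u) d₀ := by
  obtain ⟨hβ, hα⟩ := (strictConvexOn_rootLevel hc.le hk).continuousAt_sublevel_endpoints hroots
  obtain ⟨hβ0, hβα, hfβ, hfα⟩ := hroots.self_of_nhds
  obtain ⟨C, hC⟩ := eventually_norm_rootIntegrand_le (γ := γ) hn hc hk hroots hβ hα
  have hsubst : (fun d => (α d - β d) *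
      ∫ t in Ioo 0 1, rootIntegrand γ c k n d (β d + (α d - β d) * t)) =ᶠ[𝓝 d₀]
      fun d => ∫ u in Ioo (β d) (α d), rootIntegrand γ c k n d u :=
    hroots.mono fun d hd => (setIntegral_Ioo_eq_mul_setIntegral_Ioo_zero_one _ hd.2.1.le).symm
  refine ContinuousAt.congr ((hα.sub hβ).mul (continuousAt_of_dominated
    (bound := fun t => C * (√(t * (1 - t)))⁻¹) ?_ ?_ ?_ ?_)) hsubst
  · exact Eventually.of_forall fun d => (measurable_rootIntegrand.comp
      (measurable_const.add (measurable_const.mul measurable_id))).aestronglyMeasurable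
  · filter_upwards [hC] with d hd
    exact (ae_restrict_iff' measurableSet_Ioo).2 (ae_of_all _ hd)
  · simpa using (integrableOn_inv_sqrt_sub_mul_sub 0 1).const_mul C
  · refine (ae_restrict_iff' measurableSet_Ioo).2 (ae_of_all _ fun t ht => ?_)
    have hu : β d₀ + (α d₀ - β d₀) * t ∈ Ioo (β d₀) (α d₀) :=
      ⟨by nlinarith [ht.1], by nlinarith [ht.2]⟩
    exact continuousAt_rootIntegrand_comp hc.le (hβ.add ((hα.sub hβ).mul continuousAt_const))
      (hβ0.trans hu.1) (rootPoly_pos hn hc.le hk hβ0 hβα hfβ hfα hu)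

end Integral

theorem stmt_16_general (p ρ : ℝ) (n : ℕ) (hn : 3 ≤ n)
    (hp : 0 < p) (hp1 : p < 1)
    (hρ : 0 < ρ)
    (α β : ℝ → ℝ)
    (hroots : ∀ d : ℝ, ρ ^ p * p ^ p * (1 - p) ^ (1 - p) < d →
      0 < β d ∧ β d < α d ∧
      (-(1 - p) ^ 2 * (β d) ^ (n + 1) + d * (β d) ^ 3 - ρ * p ^ 2 = 0) ∧
      (-(1 - p) ^ 2 * (α d) ^ (n + 1) + d * (α d) ^ 3 - ρ * p ^ 2 = 0) ∧
      (∀ u : ℝ, β d < u → u < α d →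
        0 < -(1 - p) ^ 2 * u ^ (n + 1) + d * u ^ 3 - ρ * p ^ 2)) :
    (∀ d : ℝ, ρ ^ p * p ^ p * (1 - p) ^ (1 - p) < d →
      IntegrableOn (fun u : ℝ =>
          u ^ ((4 - p) / (2 * (1 - p))) /
            ((d * u ^ 3 - ρ * p ^ 2) *
              Real.sqrt (-(1 - p) ^ 2 * u ^ (n + 1) + d * u ^ 3 - ρ * p ^ 2)))
        (Set.Ioo (β d) (α d))) ∧
    ContinuousOn (fun d : ℝ =>
        3 * p * (1 - p) * Real.sqrt (ρ * d) *
          ∫ u in Set.Ioo (β d) (α d),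
            u ^ ((4 - p) / (2 * (1 - p))) /
              ((d * u ^ 3 - ρ * p ^ 2) *
                Real.sqrt (-(1 - p) ^ 2 * u ^ (n + 1) + d * u ^ 3 - ρ * p ^ 2)))
      (Set.Ioi (ρ ^ p * p ^ p * (1 - p) ^ (1 - p))) := by
  have hn2 : 2 ≤ n := by omega
  have hc : 0 < (1 - p) ^ 2 := pow_pos (sub_pos.2 hp1) 2
  have hk : 0 < ρ * p ^ 2 := by positivity
  have hlevel : ∀ d ∈ Ioi (ρ ^ p * p ^ p * (1 - p) ^ (1 - p)), 0 < β d ∧ β d < α d ∧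
      rootLevel ((1 - p) ^ 2) (ρ * p ^ 2) n (β d) = d ∧
      rootLevel ((1 - p) ^ 2) (ρ * p ^ 2) n (α d) = d := by
    intro d hd
    obtain ⟨hβ0, hβα, hβ, hα, -⟩ := hroots d hd
    exact ⟨hβ0, hβα, rootLevel_eq_of_rootPoly_eq_zero hn2 hβ0.ne' hβ,
      rootLevel_eq_of_rootPoly_eq_zero hn2 (hβ0.trans hβα).ne' hα⟩
  refine ⟨fun d hd => ?_, fun d hd => ?_⟩
  · obtain ⟨hβ0, hβα, hβ, hα⟩ := hlevel d hd
    exact integrableOn_rootIntegrand hn2 hc hk hβ0 hβα hβ hα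
  · exact (((continuous_const.mul (continuous_const.mul continuous_id).sqrt).continuousAt).mul
      (continuousAt_integral_rootIntegrand hn2 hc hk
        (eventually_of_mem (Ioi_mem_nhds hd) hlevel))).continuousWithinAt

theorem stmt_16 (p ρ : ℝ) (n : ℕ) (hn : 3 ≤ n)
    (hp : 0 < p) (hp1 : p < 1) (hpn : 3 / (1 - p) = (n : ℝ) + 1)
    (hρ : 0 < ρ)
    (α β : ℝ → ℝ)
    (hroots : ∀ d : ℝ, ρ ^ p * p ^ p * (1 - p) ^ (1 - p) < d →
      0 < β d ∧ β d < α d ∧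
      (-(1 - p) ^ 2 * (β d) ^ (n + 1) + d * (β d) ^ 3 - ρ * p ^ 2 = 0) ∧
      (-(1 - p) ^ 2 * (α d) ^ (n + 1) + d * (α d) ^ 3 - ρ * p ^ 2 = 0) ∧
      (∀ u : ℝ, β d < u → u < α d →
        0 < -(1 - p) ^ 2 * u ^ (n + 1) + d * u ^ 3 - ρ * p ^ 2)) :
    (∀ d : ℝ, ρ ^ p * p ^ p * (1 - p) ^ (1 - p) < d →
      IntegrableOn (fun u : ℝ =>
          u ^ ((4 - p) / (2 * (1 - p))) /
            ((d * u ^ 3 - ρ * p ^ 2) *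
              Real.sqrt (-(1 - p) ^ 2 * u ^ (n + 1) + d * u ^ 3 - ρ * p ^ 2)))
        (Set.Ioo (β d) (α d))) ∧
    ContinuousOn (fun d : ℝ =>
        3 * p * (1 - p) * Real.sqrt (ρ * d) *
          ∫ u in Set.Ioo (β d) (α d),
            u ^ ((4 - p) / (2 * (1 - p))) /
              ((d * u ^ 3 - ρ * p ^ 2) *
                Real.sqrt (-(1 - p) ^ 2 * u ^ (n + 1) + d * u ^ 3 - ρ * p ^ 2)))
      (Set.Ioi (ρ ^ p * p ^ p * (1 - p) ^ (1 - p))) :=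
  stmt_16_general p ρ n hn hp hp1 hρ α β hroots
end

section
/- Fix p ∈ (0,1), ρ > 0, d > d_*, and n with p = (n−2)/(n+1). An arc length parametrized curve γ_d in S²(ρ) ⊂ ℝ³ given by γ_d(s) = (ρ d u³(s))^{-1/2}·(√ρ·p, √(du³(s)−ρp²)·sin ψ(s), √(du³(s)−ρp²)·cos ψ(s)), where u solves u_s² = (4u²/(9p²))Q(u) with β ≤ u ≤ α and ψ'(s) = (1−p)√(ρd)·u^{3(2−p)/(2(1−p))}/(du³ − ρp²), satisfies |γ_d(s)|² = 1/ρ and |γ_d'(s)| = 1 for all s. -/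
set_option maxHeartbeats 2000000

theorem stmt_18 (p ρ d : ℝ) (n : ℕ) (hn : 3 ≤ n)
    (hpn : p = ((n : ℝ) - 2) / ((n : ℝ) + 1)) (hp : 0 < p) (hp1 : p < 1)
    (hρ : 0 < ρ) (hd : ρ ^ p * p ^ p * (1 - p) ^ (1 - p) < d)
    (α β : ℝ) (hβ : 0 < β) (hβα : β < α)
    (u ψ : ℝ → ℝ) (hu : ContDiff ℝ (⊤ : ℕ∞) u) (hψ : Differentiable ℝ ψ)
    (hrange : ∀ s, β ≤ u s ∧ u s ≤ α)
    (hpole : ∀ s, ρ * p ^ 2 < d * (u s) ^ 3)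
    (hODE : ∀ s : ℝ, (deriv u s) ^ 2 =
      4 * (u s) ^ 2 / (9 * p ^ 2) *
        (-(1 - p) ^ 2 * (u s) ^ (n + 1) + d * (u s) ^ 3 - ρ * p ^ 2))
    (hψ' : ∀ s : ℝ, deriv ψ s =
      (1 - p) * Real.sqrt (ρ * d) * (u s) ^ (3 * (2 - p) / (2 * (1 - p))) /
        (d * (u s) ^ 3 - ρ * p ^ 2))
    (γ₁ γ₂ γ₃ : ℝ → ℝ)
    (hγ₁ : ∀ s, γ₁ s = Real.sqrt ρ * p / Real.sqrt (ρ * d * (u s) ^ 3))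
    (hγ₂ : ∀ s, γ₂ s =
      Real.sqrt (d * (u s) ^ 3 - ρ * p ^ 2) * Real.sin (ψ s) /
        Real.sqrt (ρ * d * (u s) ^ 3))
    (hγ₃ : ∀ s, γ₃ s =
      Real.sqrt (d * (u s) ^ 3 - ρ * p ^ 2) * Real.cos (ψ s) /
        Real.sqrt (ρ * d * (u s) ^ 3)) :
    (∀ s : ℝ, (γ₁ s) ^ 2 + (γ₂ s) ^ 2 + (γ₃ s) ^ 2 = 1 / ρ) ∧
    (∀ s : ℝ, (deriv γ₁ s) ^ 2 + (deriv γ₂ s) ^ 2 + (deriv γ₃ s) ^ 2 = 1) := by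
  -- basic positivity
  have hd0 : 0 < d := by
    have h1 : 0 < ρ ^ p := Real.rpow_pos_of_pos hρ p
    have h2 : 0 < p ^ p := Real.rpow_pos_of_pos hp p
    have h3 : 0 < (1 - p) ^ (1 - p) := Real.rpow_pos_of_pos (by linarith) _
    linarith [mul_pos (mul_pos h1 h2) h3]
  have hUpos : ∀ s, 0 < u s := fun s => lt_of_lt_of_le hβ (hrange s).1
  have hWpos : ∀ s, 0 < d * (u s) ^ 3 - ρ * p ^ 2 := fun s => sub_pos.2 (hpole s)
  have hApos : ∀ s, 0 < ρ * d * (u s) ^ 3 := fun s => by have := hUpos s; positivity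
  have hsaPos : ∀ s, 0 < Real.sqrt (ρ * d * (u s) ^ 3) :=
    fun s => Real.sqrt_pos.2 (hApos s)
  have hswPos : ∀ s, 0 < Real.sqrt (d * (u s) ^ 3 - ρ * p ^ 2) :=
    fun s => Real.sqrt_pos.2 (hWpos s)
  have hsa2 : ∀ s, Real.sqrt (ρ * d * (u s) ^ 3) ^ 2 = ρ * d * (u s) ^ 3 :=
    fun s => Real.sq_sqrt (hApos s).le
  have hsw2 : ∀ s, Real.sqrt (d * (u s) ^ 3 - ρ * p ^ 2) ^ 2 = d * (u s) ^ 3 - ρ * p ^ 2 :=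
    fun s => Real.sq_sqrt (hWpos s).le
  have hr2 : Real.sqrt ρ ^ 2 = ρ := Real.sq_sqrt hρ.le
  have hq2 : Real.sqrt (ρ * d) ^ 2 = ρ * d := Real.sq_sqrt (by positivity)
  constructor
  · intro s
    rw [hγ₁ s, hγ₂ s, hγ₃ s]
    have hSC := Real.sin_sq_add_cos_sq (ψ s)
    have ha2 := hsa2 s; have hw2 := hsw2 s
    have hane : Real.sqrt (ρ * d * (u s) ^ 3) ≠ 0 := (hsaPos s).ne'
    rw [div_pow, div_pow, div_pow, ← add_div, ← add_div,
      div_eq_div_iff (by positivity) hρ.ne']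
    linear_combination ρ * p ^ 2 * hr2 +
      ρ * (Real.sin (ψ s) ^ 2 + Real.cos (ψ s) ^ 2) * hw2 +
      ρ * (d * (u s) ^ 3 - ρ * p ^ 2) * hSC - ha2
  · intro s
    have hUs := hUpos s
    have hWs := hWpos s
    have hAs := hApos s
    have hU' : HasDerivAt u (deriv u s) s := ((hu.differentiable (by simp)) s).hasDerivAt
    have hcube : HasDerivAt (fun t => u t ^ 3) (3 * u s ^ 2 * deriv u s) s := by
      simpa using hU'.fun_pow 3
    have hA : HasDerivAt (fun t => ρ * d * u t ^ 3)
        (ρ * d * (3 * u s ^ 2 * deriv u s)) s := hcube.const_mul (ρ * d)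
    have hW : HasDerivAt (fun t => d * u t ^ 3 - ρ * p ^ 2)
        (d * (3 * u s ^ 2 * deriv u s)) s := (hcube.const_mul d).sub_const (ρ * p ^ 2)
    have hsa : HasDerivAt (fun t => Real.sqrt (ρ * d * u t ^ 3))
        (ρ * d * (3 * u s ^ 2 * deriv u s) / (2 * Real.sqrt (ρ * d * u s ^ 3))) s :=
      hA.sqrt hAs.ne'
    have hsw : HasDerivAt (fun t => Real.sqrt (d * u t ^ 3 - ρ * p ^ 2))
        (d * (3 * u s ^ 2 * deriv u s) / (2 * Real.sqrt (d * u s ^ 3 - ρ * p ^ 2))) s :=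
      hW.sqrt hWs.ne'
    have hψs : HasDerivAt ψ (deriv ψ s) s := (hψ s).hasDerivAt
    have hane : Real.sqrt (ρ * d * u s ^ 3) ≠ 0 := (hsaPos s).ne'
    have hγ1f : γ₁ = fun t => Real.sqrt ρ * p / Real.sqrt (ρ * d * u t ^ 3) := funext hγ₁
    have hγ2f : γ₂ = fun t => Real.sqrt (d * u t ^ 3 - ρ * p ^ 2) * Real.sin (ψ t) /
        Real.sqrt (ρ * d * u t ^ 3) := funext hγ₂
    have hγ3f : γ₃ = fun t => Real.sqrt (d * u t ^ 3 - ρ * p ^ 2) * Real.cos (ψ t) /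
        Real.sqrt (ρ * d * u t ^ 3) := funext hγ₃
    have hγ1d : HasDerivAt γ₁
        ((0 * Real.sqrt (ρ * d * u s ^ 3) - Real.sqrt ρ * p *
          (ρ * d * (3 * u s ^ 2 * deriv u s) / (2 * Real.sqrt (ρ * d * u s ^ 3)))) /
          Real.sqrt (ρ * d * u s ^ 3) ^ 2) s := by
      rw [hγ1f]; exact (hasDerivAt_const s (Real.sqrt ρ * p)).div hsa hane
    have hγ2d : HasDerivAt γ₂
        (((d * (3 * u s ^ 2 * deriv u s) / (2 * Real.sqrt (d * u s ^ 3 - ρ * p ^ 2)) *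
            Real.sin (ψ s) + Real.sqrt (d * u s ^ 3 - ρ * p ^ 2) *
            (Real.cos (ψ s) * deriv ψ s)) * Real.sqrt (ρ * d * u s ^ 3) -
          Real.sqrt (d * u s ^ 3 - ρ * p ^ 2) * Real.sin (ψ s) *
            (ρ * d * (3 * u s ^ 2 * deriv u s) / (2 * Real.sqrt (ρ * d * u s ^ 3)))) /
          Real.sqrt (ρ * d * u s ^ 3) ^ 2) s := by
      rw [hγ2f]; exact (hsw.mul hψs.sin).div hsa hane
    have hγ3d : HasDerivAt γ₃
        (((d * (3 * u s ^ 2 * deriv u s) / (2 * Real.sqrt (d * u s ^ 3 - ρ * p ^ 2)) *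
            Real.cos (ψ s) + Real.sqrt (d * u s ^ 3 - ρ * p ^ 2) *
            (-Real.sin (ψ s) * deriv ψ s)) * Real.sqrt (ρ * d * u s ^ 3) -
          Real.sqrt (d * u s ^ 3 - ρ * p ^ 2) * Real.cos (ψ s) *
            (ρ * d * (3 * u s ^ 2 * deriv u s) / (2 * Real.sqrt (ρ * d * u s ^ 3)))) /
          Real.sqrt (ρ * d * u s ^ 3) ^ 2) s := by
      rw [hγ3f]; exact (hsw.mul hψs.cos).div hsa hane
    rw [hγ1d.deriv, hγ2d.deriv, hγ3d.deriv]
    -- exponent simplification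
    have hn1 : ((n : ℝ) + 1) ≠ 0 := by positivity
    have hexp : 3 * (2 - p) / (2 * (1 - p)) = ((n : ℝ) + 4) / 2 := by
      rw [hpn]; field_simp; ring
    have hΨv : deriv ψ s = (1 - p) * Real.sqrt (ρ * d) * u s ^ (((n : ℝ) + 4) / 2) /
        (d * u s ^ 3 - ρ * p ^ 2) := by rw [hψ' s, hexp]
    have hR2 : (u s ^ (((n : ℝ) + 4) / 2)) ^ 2 = u s ^ (n + 1) * u s ^ 3 := by
      rw [sq, ← Real.rpow_add hUs]
      have : ((n : ℝ) + 4) / 2 + ((n : ℝ) + 4) / 2 = ((n + 4 : ℕ) : ℝ) := by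
        push_cast; ring
      rw [this, Real.rpow_natCast, ← pow_add]
    have hODEs := hODE s
    have hSC := Real.sin_sq_add_cos_sq (ψ s)
    have ha2 := hsa2 s
    have hw2 := hsw2 s
    rw [hΨv]
    have hwne : Real.sqrt (d * u s ^ 3 - ρ * p ^ 2) ≠ 0 := (hswPos s).ne'
    have hWne : d * u s ^ 3 - ρ * p ^ 2 ≠ 0 := hWs.ne'
    have hpne : p ≠ 0 := hp.ne'
    have hODE' : 9 * p ^ 2 * (deriv u s) ^ 2 =
        4 * u s ^ 2 * (-(1 - p) ^ 2 * u s ^ (n + 1) + d * u s ^ 3 - ρ * p ^ 2) := by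
      rw [hODEs]; field_simp
    clear hγ1d hγ2d hγ3d hsa hsw hA hW hcube hU' hψs hΨv hψ' hγ1f hγ2f hγ3f hγ₁ hγ₂ hγ₃
      hODEs hODE hpole hrange hexp
    generalize hgR : u s ^ (((n : ℝ) + 4) / 2) = R at hR2 ⊢
    generalize hgE : u s ^ (n + 1) = E at hR2 hODE'
    generalize hgS : Real.sin (ψ s) = S at hSC ⊢
    generalize hgC : Real.cos (ψ s) = C at hSC ⊢
    generalize hgU' : deriv u s = U' at hODE' ⊢
    generalize hgU : u s = U at ha2 hw2 hODE' hWne hR2 hane hwne ⊢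
    generalize hga : Real.sqrt (ρ * d * U ^ 3) = a at ha2 hane ⊢
    generalize hgw : Real.sqrt (d * U ^ 3 - ρ * p ^ 2) = w at hw2 hwne ⊢
    generalize hgr : Real.sqrt ρ = r at hr2 ⊢
    generalize hgq : Real.sqrt (ρ * d) = q at hq2 ⊢
    have hU0 : U ≠ 0 := by rw [← hgU]; exact hUs.ne'
    have hx : d * (3 * U ^ 2 * U') / (2 * w) = 3 * U' * (w ^ 2 + ρ * p ^ 2) / (2 * U * w) := by
      rw [div_eq_div_iff (mul_ne_zero two_ne_zero hwne)
        (mul_ne_zero (mul_ne_zero two_ne_zero hU0) hwne)]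
      linear_combination (-6 * U' * w) * hw2
    have hy : ρ * d * (3 * U ^ 2 * U') / (2 * a) = 3 * U' * a / (2 * U) := by
      rw [div_eq_div_iff (mul_ne_zero two_ne_zero hane) (mul_ne_zero two_ne_zero hU0)]
      linear_combination (-6 * U') * ha2
    have hT : p ^ 2 * (3 * U' / (2 * U)) ^ 2 = d * U ^ 3 - ρ * p ^ 2 - (1 - p) ^ 2 * E := by
      rw [div_pow, mul_div_assoc', div_eq_iff (pow_ne_zero 2 (mul_ne_zero two_ne_zero hU0))]
      linear_combination hODE'
    have hfin : (r ^ 2 * (p ^ 2 * (3 * U' / (2 * U)) ^ 2) + ((3 * U' / (2 * U) * ρ * p ^ 2 / w) ^ 2 +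
        ((1 - p) * q * R / w) ^ 2) * (S ^ 2 + C ^ 2)) / a ^ 2 = 1 := by
      have e1 : (3 * U' / (2 * U) * ρ * p ^ 2 / w) ^ 2 =
          ρ ^ 2 * p ^ 2 * (p ^ 2 * (3 * U' / (2 * U)) ^ 2) / w ^ 2 := by ring
      have e2 : ((1 - p) * q * R / w) ^ 2 = (1 - p) ^ 2 * q ^ 2 * R ^ 2 / w ^ 2 := by ring
      have e3 : ρ ^ 2 * p ^ 2 * (d * U ^ 3 - ρ * p ^ 2 - (1 - p) ^ 2 * E) / (d * U ^ 3 - ρ * p ^ 2) +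
          (1 - p) ^ 2 * (ρ * d) * (E * U ^ 3) / (d * U ^ 3 - ρ * p ^ 2) =
          ρ ^ 2 * p ^ 2 + ρ * (1 - p) ^ 2 * E := by
        rw [← add_div, div_eq_iff hWne]; ring
      rw [hSC, mul_one, div_eq_one_iff_eq (pow_ne_zero 2 hane), e1, e2, hT, hq2, hR2, hr2, hw2, ha2]
      linear_combination e3
    rw [hx, hy, ← hw2]
    refine Eq.trans ?_ hfin
    field_simp
    ring
end
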